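/- arXiv:2006.00462 — 4 statements merged into one kernel-verified Lean document; each statement's English description precedes it below -/
import Mathlib

section
/- Let X be a reflexive Banach space, let Ω ⊂ X be subamenable at x̄ ∈ Ω, and let φ(·) := dist(·; Ω). Then dφ(x̄)(u) = dist(u; T_Ω(x̄)) for all u ∈ X, and ∂⁻φ(x̄) = N⁻_Ω(x̄) ∩ B*, where B* is the closed unit ball of X*. Furthermore, φ is epi-differentiable at x̄ and its subderivative is given by the full limit dφ(x̄)(u) = lim_{t↓0} (φ(x̄+tu) − φ(x̄))/t for all u ∈ X. -/
open Filter Topology Set Metric Pointwise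

noncomputable section

variable {E : Type*} [NormedAddCommGroup E] [NormedSpace ℝ E]

/-- Bouligand–Severi contingent tangent cone. -/
def contTangent (Ω : Set E) (x : E) : Set E :=
  {u | ∃ t : ℕ → ℝ, ∃ v : ℕ → E,
    (∀ k, 0 < t k) ∧ Tendsto t atTop (𝓝 0) ∧ Tendsto v atTop (𝓝 u) ∧
    ∀ k, x + t k • v k ∈ Ω}

/-- Dini–Hadamard subnormal cone. -/
def subNormal (Ω : Set E) (x : E) : Set (E →L[ℝ] ℝ) :=
  {v | ∀ u ∈ contTangent Ω x, v u ≤ 0}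

/-- Normal cone of convex analysis. -/
def convNormal (Θ : Set E) (y : E) : Set (E →L[ℝ] ℝ) :=
  {l | ∀ z ∈ Θ, l (z - y) ≤ 0}

/-- Difference quotient of an extended-real-valued function. -/
def diffQuot (φ : E → EReal) (x : E) (t : ℝ) (u : E) : EReal :=
  ((t⁻¹ : ℝ) : EReal) * (φ (x + t • u) - φ x)

/-- Dini–Hadamard subderivative. -/
def subDeriv (φ : E → EReal) (x : E) (u : E) : EReal :=
  Filter.liminf (fun p : ℝ × E => diffQuot φ x p.1 p.2) ((𝓝[>] (0:ℝ)) ×ˢ 𝓝 u)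

/-- Dini–Hadamard subdifferential. -/
def subDiff (φ : E → EReal) (x : E) : Set (E →L[ℝ] ℝ) :=
  {v | ∀ u, (v u : EReal) ≤ subDeriv φ x u}

/-- Proper extended-real-valued function. -/
def properFun (ψ : E → EReal) : Prop := (∀ u, ψ u ≠ ⊥) ∧ ∃ u, ψ u ≠ ⊤

def epiSet (g : E → EReal) : Set (E × ℝ) := {p | g p.1 ≤ (p.2 : EReal)}

/-- Painlevé–Kuratowski sequential outer limit as t ↓ 0. -/
def outerLim {α : Type*} [TopologicalSpace α] (S : ℝ → Set α) : Set α :=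
  {z | ∃ t : ℕ → ℝ, ∃ w : ℕ → α, (∀ k, 0 < t k) ∧ Tendsto t atTop (𝓝 0) ∧
    Tendsto w atTop (𝓝 z) ∧ ∀ k, w k ∈ S (t k)}

/-- Painlevé–Kuratowski sequential inner limit as t ↓ 0. -/
def innerLim {α : Type*} [TopologicalSpace α] (S : ℝ → Set α) : Set α :=
  {z | ∀ t : ℕ → ℝ, (∀ k, 0 < t k) → Tendsto t atTop (𝓝 0) →
    ∃ w : ℕ → α, Tendsto w atTop (𝓝 z) ∧ ∀ᶠ k in atTop, w k ∈ S (t k)}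

/-- Epi-differentiability at a point. -/
def epiDiffAt (φ : E → EReal) (x : E) : Prop :=
  outerLim (fun t => epiSet (fun u => diffQuot φ x t u)) = epiSet (subDeriv φ x) ∧
  innerLim (fun t => epiSet (fun u => diffQuot φ x t u)) = epiSet (subDeriv φ x)

/-- Relative Lipschitz continuity around x w.r.t. Ω with constant ℓ. -/
def RelLipschitzOn (φ : E → EReal) (Ω : Set E) (x : E) (ℓ : ℝ) : Prop :=
  ∃ U ∈ 𝓝 x, ∀ y ∈ Ω ∩ U, ∀ z ∈ Ω ∩ U, φ y - φ z ≤ ((ℓ * ‖y - z‖ : ℝ) : EReal)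

def RelLipschitzAround (φ : E → EReal) (Ω : Set E) (x : E) : Prop :=
  ∃ ℓ : ℝ, 0 ≤ ℓ ∧ RelLipschitzOn φ Ω x ℓ

/-- Local Lipschitz continuity of an extended-real-valued function around x (finite nearby). -/
def LocLipschitzAt (φ : E → EReal) (x : E) : Prop :=
  ∃ ℓ : ℝ, ∃ U ∈ 𝓝 x, (∀ z ∈ U, φ z ≠ ⊤) ∧
    ∀ z ∈ U, ∀ w ∈ U, φ z - φ w ≤ ((ℓ * ‖z - w‖ : ℝ) : EReal)

/-- Dini–Hadamard regularity. -/
def DHRegular (φ : E → EReal) (x : E) : Prop :=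
  ∀ u, sSup ((fun v : E →L[ℝ] ℝ => (v u : EReal)) '' subDiff φ x) = subDeriv φ x u

def weakStarClosure (S : Set (E →L[ℝ] ℝ)) : Set (E →L[ℝ] ℝ) :=
  closure (show Set (WeakDual ℝ E) from S)

def IsWeakStarClosed (S : Set (E →L[ℝ] ℝ)) : Prop :=
  IsClosed (show Set (WeakDual ℝ E) from S)

/-! Write `A = f'(x̄)` and `D` for the cone of feasible directions of `Θ` at `f x̄`. The quotients
`t⁻¹ d(x̄ + t u, Ω)` converge to `d(u, K)` with `K = A⁻¹ (cl D)`. The upper bound comes from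
convexity (`f x̄ + t p ∈ Θ` for `p ∈ D` and small `t`) and the error bound `d(·, Ω) ≤ κ d(f ·, Θ)`;
the lower bound from `Ω ⊆ f⁻¹ Θ`, which maps directions into `Ω` almost into `D`, together with
the linearized error bound `d(u, K) ≤ κ d(A u, D)`. The latter follows by iterating both
estimates and passing to the limit in the complete space `X`.

Once the full limit exists, `K` is the contingent cone. The quotients are 1-Lipschitz in the
direction, so the limit is locally uniform in `u`; this yields the subderivative and the
epi-differentiability, and the subdifferential is the polar of `K` cut by the unit ball. -/

theorem infDist_le_of_forall_exists_step {α : Type*} [PseudoMetricSpace α] [CompleteSpace α]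
    {h : α → ℝ} (hh : Continuous h) {κ : ℝ} (hκ : 0 ≤ κ)
    (step : ∀ w, ∀ ε > 0, ∃ w', dist w w' ≤ κ * h w + ε ∧ h w' ≤ ε) (u : α) :
    infDist u {w | h w ≤ 0} ≤ κ * h u := by
  refine le_of_forall_pos_le_add fun ε hε => ?_
  choose next hdist hnext using step
  set η := ε / (2 * κ + 3) with hη_def
  have hη : 0 < η := by positivity
  have hδ : ∀ n : ℕ, 0 < η * (1 / 2) ^ n := fun n => by positivity
  let w : ℕ → α := fun n => Nat.rec u (fun k wk => next wk _ (hδ k)) n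
  have hw_h : ∀ n, h (w (n + 1)) ≤ η * (1 / 2) ^ n := fun n => hnext _ _ _
  have hw_dist : ∀ n, dist (w n) (w (n + 1)) ≤ κ * h (w n) + η * (1 / 2) ^ n :=
    fun n => hdist _ _ _
  have hgeo : ∀ n, dist (w (n + 1)) (w (n + 1 + 1)) ≤ (κ + 1) * η * (1 / 2) ^ n := by
    intro n
    calc _ ≤ κ * h (w (n + 1)) + η * (1 / 2) ^ (n + 1) := hw_dist (n + 1)
      _ ≤ κ * (η * (1 / 2) ^ n) + η * (1 / 2) ^ n := by
          gcongr κ * ?_ + η * ?_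
          · exact hw_h n
          · exact pow_le_pow_of_le_one (by norm_num) (by norm_num) n.le_succ
      _ = (κ + 1) * η * (1 / 2) ^ n := by ring
  obtain ⟨a, ha⟩ := cauchySeq_tendsto_of_complete
    (cauchySeq_of_le_geometric (1 / 2) _ (by norm_num) hgeo)
  have ha_mem : h a ≤ 0 := by
    refine le_of_tendsto_of_tendsto ((hh.tendsto a).comp ha) ?_ (Eventually.of_forall hw_h)
    simpa using (tendsto_pow_atTop_nhds_zero_of_lt_one (r := (1 / 2 : ℝ))
      (by norm_num) (by norm_num)).const_mul η
  have h1a : dist (w 1) a ≤ (κ + 1) * η / (1 - 1 / 2) :=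
    dist_le_of_le_geometric_of_tendsto₀ _ _ (by norm_num) hgeo ha
  -- the path `u = w 0, w 1, …` has length at most `κ * h u + η + 2 * (κ + 1) * η`
  calc infDist u {w | h w ≤ 0} ≤ dist u a := infDist_le_dist_of_mem ha_mem
    _ ≤ dist u (w 1) + dist (w 1) a := dist_triangle _ _ _
    _ ≤ κ * h u + η * (1 / 2) ^ 0 + (κ + 1) * η / (1 - 1 / 2) := add_le_add (hw_dist 0) h1a
    _ = κ * h u + ε := by rw [hη_def]; field_simp; ring

def realDiffQuot (φ : E → ℝ) (x : E) (t : ℝ) (u : E) : ℝ :=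
  t⁻¹ * (φ (x + t • u) - φ x)

theorem diffQuot_coe (φ : E → ℝ) (x : E) (t : ℝ) (u : E) :
    diffQuot (fun y => (φ y : EReal)) x t u = realDiffQuot φ x t u := by
  simp only [diffQuot, realDiffQuot, EReal.coe_sub, EReal.coe_mul]

theorem lipschitzWith_realDiffQuot {φ : E → ℝ} {K : NNReal} (hφ : LipschitzWith K φ) (x : E)
    {t : ℝ} (ht : 0 < t) : LipschitzWith K (realDiffQuot φ x t) := by
  refine LipschitzWith.of_dist_le_mul fun a b => ?_
  calc dist (realDiffQuot φ x t a) (realDiffQuot φ x t b)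
      = t⁻¹ * dist (φ (x + t • a)) (φ (x + t • b)) := by
        simp only [realDiffQuot, Real.dist_eq, ← mul_sub, sub_sub_sub_cancel_right, abs_mul,
          abs_of_pos (inv_pos.2 ht)]
    _ ≤ t⁻¹ * (K * dist (x + t • a) (x + t • b)) := by gcongr; exact hφ.dist_le_mul _ _
    _ = K * dist a b := by
        rw [dist_add_left, dist_smul₀, Real.norm_eq_abs, abs_of_pos ht]
        field_simp

theorem LipschitzWith.tendsto_realDiffQuot_prod {φ : E → ℝ} {K : NNReal}
    (hφ : LipschitzWith K φ) {x u : E} {L : ℝ}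
    (h : Tendsto (fun t => realDiffQuot φ x t u) (𝓝[>] 0) (𝓝 L)) :
    Tendsto (fun p : ℝ × E => realDiffQuot φ x p.1 p.2) (𝓝[>] 0 ×ˢ 𝓝 u) (𝓝 L) := by
  rw [tendsto_iff_dist_tendsto_zero] at h ⊢
  have hbound : Tendsto (fun p : ℝ × E => dist (realDiffQuot φ x p.1 u) L + K * dist p.2 u)
      (𝓝[>] 0 ×ˢ 𝓝 u) (𝓝 0) := by
    have hsnd :=
      tendsto_iff_dist_tendsto_zero.1 (tendsto_snd (f := 𝓝[>] (0 : ℝ)) (g := 𝓝 u))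
    simpa using (h.comp tendsto_fst).add (hsnd.const_mul (K : ℝ))
  refine squeeze_zero' (Eventually.of_forall fun _ => dist_nonneg) ?_ hbound
  filter_upwards [prod_mem_prod self_mem_nhdsWithin univ_mem] with p hp
  calc dist (realDiffQuot φ x p.1 p.2) L
      ≤ dist (realDiffQuot φ x p.1 p.2) (realDiffQuot φ x p.1 u)
        + dist (realDiffQuot φ x p.1 u) L := dist_triangle _ _ _
    _ ≤ K * dist p.2 u + dist (realDiffQuot φ x p.1 u) L :=
        add_le_add_left ((lipschitzWith_realDiffQuot hφ x hp.1).dist_le_mul _ _) _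
    _ = _ := add_comm _ _

theorem subDeriv_coe_eq_of_tendsto {φ : E → ℝ} {x u : E} {L : ℝ}
    (h : Tendsto (fun p : ℝ × E => realDiffQuot φ x p.1 p.2) (𝓝[>] 0 ×ˢ 𝓝 u) (𝓝 L)) :
    subDeriv (fun y => (φ y : EReal)) x u = L := by
  simp only [subDeriv, diffQuot_coe]
  exact (EReal.tendsto_coe.2 h).liminf_eq

theorem innerLim_subset_outerLim {α : Type*} [TopologicalSpace α] (S : ℝ → Set α) :
    innerLim S ⊆ outerLim S := by
  intro z hz
  obtain ⟨w, hw, hwS⟩ := hz (fun k => 1 / ((k : ℝ) + 1)) (fun k => by positivity)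
    tendsto_one_div_add_atTop_nhds_zero_nat
  obtain ⟨N, hN⟩ := eventually_atTop.1 hwS
  exact ⟨fun k => 1 / (((k + N : ℕ) : ℝ) + 1), fun k => w (k + N), fun k => by positivity,
    tendsto_one_div_add_atTop_nhds_zero_nat.comp (tendsto_add_atTop_nat N),
    hw.comp (tendsto_add_atTop_nat N), fun k => hN _ (Nat.le_add_left N k)⟩

theorem epiDiffAt_coe_of_tendsto {φ : E → ℝ} {x : E} {g : E → ℝ}
    (h : ∀ u, Tendsto (fun p : ℝ × E => realDiffQuot φ x p.1 p.2)
      (𝓝[>] 0 ×ˢ 𝓝 u) (𝓝 (g u))) :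
    epiDiffAt (fun y => (φ y : EReal)) x := by
  have mem_epi_quot : ∀ t (p : E × ℝ),
      p ∈ epiSet (fun u => diffQuot (fun y => (φ y : EReal)) x t u) ↔
        realDiffQuot φ x t p.1 ≤ p.2 := fun t p => by
    simp only [epiSet, mem_ofPred_eq, diffQuot_coe, EReal.coe_le_coe_iff]
  have mem_epi_subDeriv : ∀ p : E × ℝ,
      p ∈ epiSet (subDeriv (fun y => (φ y : EReal)) x) ↔ g p.1 ≤ p.2 := fun p => by
    simp only [epiSet, mem_ofPred_eq, subDeriv_coe_eq_of_tendsto (h p.1), EReal.coe_le_coe_iff]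
  have outer_subset : outerLim (fun t => epiSet (fun u => diffQuot (fun y => (φ y : EReal)) x t u))
      ⊆ epiSet (subDeriv (fun y => (φ y : EReal)) x) := by
    rintro ⟨u, r⟩ ⟨t, w, htpos, ht0, hw, hwS⟩
    have htw : Tendsto (fun k => (t k, (w k).1)) atTop (𝓝[>] 0 ×ˢ 𝓝 u) :=
      (tendsto_nhdsWithin_iff.2 ⟨ht0, Eventually.of_forall htpos⟩).prodMk
        ((continuous_fst.tendsto _).comp hw)
    exact (mem_epi_subDeriv _).2 (le_of_tendsto_of_tendsto ((h u).comp htw)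
      ((continuous_snd.tendsto _).comp hw)
      (Eventually.of_forall fun k => (mem_epi_quot _ _).1 (hwS k)))
  have subset_inner : epiSet (subDeriv (fun y => (φ y : EReal)) x)
      ⊆ innerLim (fun t => epiSet (fun u => diffQuot (fun y => (φ y : EReal)) x t u)) := by
    rintro ⟨u, r⟩ hur t htpos ht0
    have hgr : g u ≤ r := (mem_epi_subDeriv _).1 hur
    have htu : Tendsto (fun k => (t k, u)) atTop (𝓝[>] 0 ×ˢ 𝓝 u) :=
      (tendsto_nhdsWithin_iff.2 ⟨ht0, Eventually.of_forall htpos⟩).prodMk tendsto_const_nhds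
    refine ⟨fun k => (u, max r (realDiffQuot φ x (t k) u)), ?_,
      Eventually.of_forall fun k => (mem_epi_quot _ _).2 (le_max_right _ _)⟩
    simpa [max_eq_left hgr] using (tendsto_const_nhds (x := u)).prodMk_nhds
      ((tendsto_const_nhds (x := r)).max ((h u).comp htu))
  exact ⟨(outer_subset.antisymm (subset_inner.trans (innerLim_subset_outerLim _))),
    (((innerLim_subset_outerLim _).trans outer_subset).antisymm subset_inner)⟩

theorem forall_le_infDist_iff {T : Set E} (h0 : (0 : E) ∈ T) (v : E →L[ℝ] ℝ) :
    (∀ u, v u ≤ infDist u T) ↔ (∀ u ∈ T, v u ≤ 0) ∧ ‖v‖ ≤ 1 := by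
  constructor
  · intro hv
    refine ⟨fun u hu => (hv u).trans_eq (infDist_zero_of_mem hu), ?_⟩
    have hv_norm : ∀ u, v u ≤ ‖u‖ := fun u =>
      (hv u).trans (by simpa using infDist_le_dist_of_mem (x := u) h0)
    refine v.opNorm_le_bound zero_le_one fun u => ?_
    rw [one_mul, Real.norm_eq_abs, abs_le]
    constructor
    · exact neg_le.1 (by simpa using hv_norm (-u))
    · exact hv_norm u
  · rintro ⟨hpolar, hnorm⟩ u
    refine (le_infDist ⟨0, h0⟩).2 fun w hw => ?_
    calc v u = v (u - w) + v w := by rw [map_sub, sub_add_cancel]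
      _ ≤ ‖v‖ * ‖u - w‖ + 0 :=
          add_le_add ((le_abs_self _).trans (v.le_opNorm _)) (hpolar w hw)
      _ ≤ dist u w := by
          rw [dist_eq_norm, add_zero]
          exact mul_le_of_le_one_left (norm_nonneg _) hnorm

theorem subDiff_eq_of_subDeriv_eq_infDist {φ : E → EReal} {x : E} {T : Set E}
    (h0 : (0 : E) ∈ T) (h : ∀ u, subDeriv φ x u = infDist u T) :
    subDiff φ x = {v | ∀ u ∈ T, v u ≤ 0} ∩ {v | ‖v‖ ≤ 1} := by
  ext v
  simp only [subDiff, h, EReal.coe_le_coe_iff, mem_ofPred_eq, mem_inter_iff]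
  exact forall_le_infDist_iff h0 v

theorem realDiffQuot_infDist_le_add {Ω : Set E} (x : E) {t : ℝ} (ht : 0 < t) (u w : E) :
    realDiffQuot (infDist · Ω) x t u ≤ realDiffQuot (infDist · Ω) x t w + dist u w := by
  have h := (lipschitzWith_realDiffQuot (lipschitz_infDist_pt Ω) x ht).dist_le_mul u w
  rw [NNReal.coe_one, one_mul, Real.dist_eq] at h
  linarith [le_abs_self (realDiffQuot (infDist · Ω) x t u - realDiffQuot (infDist · Ω) x t w)]

theorem realDiffQuot_infDist_le {Ω : Set E} {x u v : E} {t : ℝ} (hx : x ∈ Ω) (ht : 0 < t)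
    (hv : x + t • v ∈ Ω) : realDiffQuot (infDist · Ω) x t u ≤ dist u v := by
  simpa [realDiffQuot, infDist_zero_of_mem hx, infDist_zero_of_mem hv] using
    realDiffQuot_infDist_le_add (Ω := Ω) x ht u v

theorem exists_dist_lt_of_realDiffQuot_lt {Ω : Set E} {x u : E} {t r : ℝ} (hx : x ∈ Ω)
    (ht : 0 < t) (h : realDiffQuot (infDist · Ω) x t u < r) :
    ∃ v, x + t • v ∈ Ω ∧ dist u v < r := by
  rw [realDiffQuot, infDist_zero_of_mem hx, sub_zero, inv_mul_lt_iff₀ ht] at h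
  obtain ⟨ω, hω, hdist⟩ := (infDist_lt_iff ⟨x, hx⟩).1 h
  have hω_eq : x + t • (t⁻¹ • (ω - x)) = ω := by
    rw [smul_inv_smul₀ ht.ne', add_sub_cancel]
  refine ⟨t⁻¹ • (ω - x), hω_eq.symm ▸ hω, ?_⟩
  rw [← hω_eq, dist_add_left, dist_smul₀, Real.norm_of_nonneg ht.le] at hdist
  exact lt_of_mul_lt_mul_left hdist ht.le

theorem zero_mem_contTangent {Ω : Set E} {x : E} (hx : x ∈ Ω) : (0 : E) ∈ contTangent Ω x :=
  ⟨fun k => 1 / ((k : ℝ) + 1), fun _ => 0, fun k => by positivity,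
    tendsto_one_div_add_atTop_nhds_zero_nat, tendsto_const_nhds, fun k => by simpa using hx⟩

theorem mem_contTangent_iff_of_tendsto {Ω : Set E} {x u : E} {L : ℝ} (hx : x ∈ Ω)
    (h : Tendsto (fun t => realDiffQuot (infDist · Ω) x t u) (𝓝[>] 0) (𝓝 L)) :
    u ∈ contTangent Ω x ↔ L = 0 := by
  constructor
  · rintro ⟨t, v, htpos, ht0, hv, hmem⟩
    refine le_antisymm ?_ (ge_of_tendsto h ?_)
    · exact le_of_tendsto_of_tendsto
        (h.comp (tendsto_nhdsWithin_iff.2 ⟨ht0, Eventually.of_forall htpos⟩))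
        (by simpa using (tendsto_const_nhds (x := u)).dist hv)
        (Eventually.of_forall fun k => realDiffQuot_infDist_le hx (htpos k) (hmem k))
    · filter_upwards [self_mem_nhdsWithin] with t (ht : 0 < t)
      simpa [realDiffQuot, infDist_zero_of_mem hx] using
        mul_nonneg (inv_nonneg.2 ht.le) infDist_nonneg
  · rintro rfl
    set t : ℕ → ℝ := fun k => 1 / ((k : ℝ) + 1)
    have htpos : ∀ k, 0 < t k := fun k => by positivity
    have ht0 : Tendsto t atTop (𝓝[>] 0) :=
      tendsto_nhdsWithin_iff.2 ⟨tendsto_one_div_add_atTop_nhds_zero_nat,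
        Eventually.of_forall htpos⟩
    choose v hvΩ hv using fun k => exists_dist_lt_of_realDiffQuot_lt hx (htpos k)
      (lt_add_of_pos_right (realDiffQuot (infDist · Ω) x (t k) u) (htpos k))
    refine ⟨t, v, htpos, tendsto_nhdsWithin_iff.1 ht0 |>.1, ?_, hvΩ⟩
    rw [tendsto_iff_dist_tendsto_zero]
    refine squeeze_zero (fun _ => dist_nonneg) (fun k => (dist_comm _ _).trans_le (hv k).le) ?_
    simpa using (h.comp ht0).add (tendsto_nhdsWithin_iff.1 ht0).1

theorem contTangent_eq_of_tendsto {Ω K : Set E} {x : E} (hx : x ∈ Ω) (hK : IsClosed K)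
    (hKne : K.Nonempty)
    (h : ∀ u,
      Tendsto (fun t => realDiffQuot (infDist · Ω) x t u) (𝓝[>] 0) (𝓝 (infDist u K))) :
    contTangent Ω x = K := by
  ext u
  rw [mem_contTangent_iff_of_tendsto hx (h u), hK.mem_iff_infDist_zero hKne]

def feasibleDirections (Θ : Set E) (y : E) : Set E :=
  {p | ∃ s : ℝ, 0 < s ∧ y + s • p ∈ Θ}

section FeasibleDirections

variable {Θ : Set E} {y : E}

theorem sub_mem_feasibleDirections {z : E} (hz : z ∈ Θ) : z - y ∈ feasibleDirections Θ y :=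
  ⟨1, one_pos, by simpa using hz⟩

theorem zero_mem_feasibleDirections (hy : y ∈ Θ) : (0 : E) ∈ feasibleDirections Θ y := by
  simpa using sub_mem_feasibleDirections (y := y) hy

theorem smul_mem_feasibleDirections {c : ℝ} (hc : 0 < c) {p : E}
    (hp : p ∈ feasibleDirections Θ y) : c • p ∈ feasibleDirections Θ y := by
  obtain ⟨s, hs, hsp⟩ := hp
  exact ⟨s / c, div_pos hs hc, by rwa [smul_smul, div_mul_cancel₀ _ hc.ne']⟩

theorem infDist_smul_feasibleDirections {c : ℝ} (hc : 0 < c) (p : E) :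
    infDist (c • p) (feasibleDirections Θ y) = c * infDist p (feasibleDirections Θ y) := by
  have hcone : c • feasibleDirections Θ y = feasibleDirections Θ y := by
    ext q
    rw [mem_smul_set_iff_inv_smul_mem₀ hc.ne']
    refine ⟨fun hq => ?_, smul_mem_feasibleDirections (inv_pos.2 hc)⟩
    simpa [smul_smul, hc.ne'] using smul_mem_feasibleDirections hc hq
  conv_lhs => rw [← hcone]
  rw [infDist_smul₀ hc.ne', Real.norm_of_nonneg hc.le]

theorem Convex.eventually_add_smul_mem (hΘ : Convex ℝ Θ) (hy : y ∈ Θ) {p : E}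
    (hp : p ∈ feasibleDirections Θ y) : ∀ᶠ t in 𝓝[>] (0 : ℝ), y + t • p ∈ Θ := by
  obtain ⟨s, hs, hsp⟩ := hp
  filter_upwards [Ioc_mem_nhdsGT hs] with t ⟨ht, hts⟩
  have h := hΘ.add_smul_mem hy hsp ⟨div_nonneg ht.le hs.le, (div_le_one hs).2 hts⟩
  rwa [smul_smul, div_mul_cancel₀ _ hs.ne'] at h

end FeasibleDirections

section Subamenable

variable {X Y : Type*} [NormedAddCommGroup X] [NormedSpace ℝ X]
  [NormedAddCommGroup Y] [NormedSpace ℝ Y]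

theorem HasFDerivAt.eventually_infDist_le {f : X → Y} {A : X →L[ℝ] Y} {x : X} {Θ : Set Y}
    (hA : HasFDerivAt f A x) (hΘ : Convex ℝ Θ) (hx : f x ∈ Θ) (u : X) {ε : ℝ}
    (hε : 0 < ε) :
    ∀ᶠ t in 𝓝[>] (0 : ℝ),
      infDist (f (x + t • u)) Θ ≤ t * (infDist (A u) (feasibleDirections Θ (f x)) + ε) := by
  set D := feasibleDirections Θ (f x)
  obtain ⟨p, hpD, hp⟩ := (infDist_lt_iff ⟨0, zero_mem_feasibleDirections hx⟩).1
    (lt_add_of_pos_right (infDist (A u) D) (half_pos hε))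
  have hslope :
      Tendsto (fun t : ℝ => t⁻¹ • (f (x + t • u) - f x)) (𝓝[>] 0) (𝓝 (A u)) := by
    have hline : HasDerivAt (fun t : ℝ => x + t • u) u 0 := by
      simpa using ((hasDerivAt_id (0 : ℝ)).smul_const u).const_add x
    simpa using (hA.comp_hasDerivAt_of_eq (0 : ℝ) hline (by simp)).tendsto_slope_zero_right
  filter_upwards [hslope (ball_mem_nhds _ (half_pos hε)), hΘ.eventually_add_smul_mem hx hpD,
    self_mem_nhdsWithin] with t hslope_t hmem (ht : 0 < t)
  calc infDist (f (x + t • u)) Θ ≤ dist (f (x + t • u)) (f x + t • p) :=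
        infDist_le_dist_of_mem hmem
    _ = dist (f x + t • (t⁻¹ • (f (x + t • u) - f x))) (f x + t • p) := by
        rw [smul_inv_smul₀ ht.ne', add_sub_cancel]
    _ = t * dist (t⁻¹ • (f (x + t • u) - f x)) p := by
        rw [dist_add_left, dist_smul₀, Real.norm_of_nonneg ht.le]
    _ ≤ t * (dist (t⁻¹ • (f (x + t • u) - f x)) (A u) + dist (A u) p) := by
        gcongr; exact dist_triangle _ _ _
    _ ≤ t * (ε / 2 + (infDist (A u) D + ε / 2)) := by
        gcongr
        exact (mem_ball.1 hslope_t).le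
    _ = t * (infDist (A u) D + ε) := by ring

/-- The part of subamenability that the argument uses; `A` stands for `f'(x)`. -/
structure IsSubamenableAt (Ω : Set X) (x : X) (f : X → Y) (A : X →L[ℝ] Y) (Θ : Set Y)
    (κ : ℝ) : Prop where
  mem : x ∈ Ω
  hasFDerivAt : HasFDerivAt f A x
  convex : Convex ℝ Θ
  nonneg : 0 ≤ κ
  eventually_map_mem : ∀ᶠ y in 𝓝 x, y ∈ Ω → f y ∈ Θ
  eventually_infDist_le : ∀ᶠ y in 𝓝 x, infDist y Ω ≤ κ * infDist (f y) Θ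

namespace IsSubamenableAt

variable {Ω : Set X} {x : X} {f : X → Y} {A : X →L[ℝ] Y} {Θ : Set Y} {κ : ℝ}

theorem map_mem (H : IsSubamenableAt Ω x f A Θ κ) : f x ∈ Θ :=
  H.eventually_map_mem.self_of_nhds H.mem

theorem nonempty_preimage_closure (H : IsSubamenableAt Ω x f A Θ κ) :
    (A ⁻¹' closure (feasibleDirections Θ (f x))).Nonempty :=
  ⟨0, by
    rw [mem_preimage, map_zero]
    exact subset_closure (zero_mem_feasibleDirections H.map_mem)⟩

theorem eventually_realDiffQuot_le (H : IsSubamenableAt Ω x f A Θ κ) (u : X) {ε : ℝ}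
    (hε : 0 < ε) : ∀ᶠ t in 𝓝[>] (0 : ℝ),
      realDiffQuot (infDist · Ω) x t u ≤
        κ * infDist (A u) (feasibleDirections Θ (f x)) + ε := by
  set d := infDist (A u) (feasibleDirections Θ (f x))
  have hκ1 : 0 < κ + 1 := by linarith [H.nonneg]
  have hline : Tendsto (fun t : ℝ => x + t • u) (𝓝[>] 0) (𝓝 x) :=
    tendsto_nhdsWithin_of_tendsto_nhds
      ((by fun_prop : Continuous fun t : ℝ => x + t • u).tendsto' 0 x (by simp))
  filter_upwards [hline.eventually H.eventually_infDist_le,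
    H.hasFDerivAt.eventually_infDist_le H.convex H.map_mem u (div_pos hε hκ1),
    self_mem_nhdsWithin] with t hsub hmap (ht : 0 < t)
  have hκε : κ * (ε / (κ + 1)) ≤ ε := by
    rw [mul_div_left_comm]
    exact mul_le_of_le_one_right hε.le ((div_le_one hκ1).2 (by linarith))
  rw [realDiffQuot, infDist_zero_of_mem H.mem, sub_zero, inv_mul_le_iff₀ ht]
  calc infDist (x + t • u) Ω ≤ κ * infDist (f (x + t • u)) Θ := hsub
    _ ≤ κ * (t * (d + ε / (κ + 1))) := mul_le_mul_of_nonneg_left hmap H.nonneg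
    _ = t * (κ * d + κ * (ε / (κ + 1))) := by ring
    _ ≤ t * (κ * d + ε) := by gcongr

theorem eventually_infDist_le_mul_norm (H : IsSubamenableAt Ω x f A Θ κ) {ε : ℝ}
    (hε : 0 < ε) :
    ∀ᶠ y in 𝓝 x, y ∈ Ω →
      infDist (A (y - x)) (feasibleDirections Θ (f x)) ≤ ε * ‖y - x‖ := by
  filter_upwards [H.eventually_map_mem, H.hasFDerivAt.isLittleO.def hε] with y hmap hlo hy
  calc infDist (A (y - x)) (feasibleDirections Θ (f x)) ≤ dist (A (y - x)) (f y - f x) :=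
        infDist_le_dist_of_mem (sub_mem_feasibleDirections (hmap hy))
    _ = ‖f y - f x - A (y - x)‖ := by rw [dist_comm, dist_eq_norm]
    _ ≤ ε * ‖y - x‖ := hlo

theorem eventually_exists_dist_lt_and_infDist_le (H : IsSubamenableAt Ω x f A Θ κ) (u : X)
    {ε : ℝ} (hε : 0 < ε) : ∀ᶠ t in 𝓝[>] (0 : ℝ), ∃ v,
      dist u v < realDiffQuot (infDist · Ω) x t u + ε ∧
        infDist (A v) (feasibleDirections Θ (f x)) ≤ ε := by
  set R := 2 * ‖u‖ + ε + 1
  have hR : 0 < R := by positivity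
  obtain ⟨δ, hδ, hball⟩ :=
    Metric.eventually_nhds_iff.1 (H.eventually_infDist_le_mul_norm (div_pos hε hR))
  filter_upwards [Ioo_mem_nhdsGT (div_pos hδ hR)] with t ⟨ht, htδ⟩
  obtain ⟨v, hvΩ, huv⟩ :=
    exists_dist_lt_of_realDiffQuot_lt H.mem ht (lt_add_of_pos_right _ hε)
  refine ⟨v, huv, ?_⟩
  have hq : realDiffQuot (infDist · Ω) x t u ≤ ‖u‖ := by
    simpa using realDiffQuot_infDist_le (u := u) H.mem ht (v := 0) (by simpa using H.mem)
  have hvR : ‖v‖ < R := by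
    have := norm_sub_norm_le v u
    rw [← dist_eq_norm, dist_comm] at this
    linarith
  have hnear : dist (x + t • v) x < δ := by
    rw [dist_eq_norm, add_sub_cancel_left, norm_smul, Real.norm_of_nonneg ht.le]
    calc t * ‖v‖ ≤ t * R := by gcongr
      _ < δ := (lt_div_iff₀ hR).1 htδ
  have h := hball hnear hvΩ
  rw [add_sub_cancel_left, map_smul, infDist_smul_feasibleDirections ht, norm_smul,
    Real.norm_of_nonneg ht.le, mul_left_comm] at h
  calc infDist (A v) (feasibleDirections Θ (f x)) ≤ ε / R * ‖v‖ :=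
        le_of_mul_le_mul_left h ht
    _ ≤ ε / R * R := by gcongr
    _ = ε := div_mul_cancel₀ ε hR.ne'

theorem infDist_preimage_closure_le [CompleteSpace X] (H : IsSubamenableAt Ω x f A Θ κ) (u : X) :
    infDist u (A ⁻¹' closure (feasibleDirections Θ (f x))) ≤
      κ * infDist (A u) (feasibleDirections Θ (f x)) := by
  set D := feasibleDirections Θ (f x)
  have hset : A ⁻¹' closure D = {w | infDist (A w) D ≤ 0} := by
    ext w
    rw [mem_preimage, mem_closure_iff_infDist_zero ⟨0, zero_mem_feasibleDirections H.map_mem⟩,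
      mem_ofPred_eq, le_antisymm_iff, and_iff_left infDist_nonneg]
  rw [hset]
  refine infDist_le_of_forall_exists_step (h := fun w => infDist (A w) D)
    ((continuous_infDist_pt D).comp A.continuous)
    H.nonneg (fun w ε hε => ?_) u
  obtain ⟨t, hq, v, hwv, hv⟩ := ((H.eventually_realDiffQuot_le w (half_pos hε)).and
    (H.eventually_exists_dist_lt_and_infDist_le w (half_pos hε))).exists
  exact ⟨v, by linarith, hv.trans (half_le_self hε.le)⟩

theorem tendsto_realDiffQuot [CompleteSpace X] (H : IsSubamenableAt Ω x f A Θ κ) (u : X) :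
    Tendsto (fun t => realDiffQuot (infDist · Ω) x t u) (𝓝[>] 0)
      (𝓝 (infDist u (A ⁻¹' closure (feasibleDirections Θ (f x))))) := by
  set D := feasibleDirections Θ (f x)
  set K := A ⁻¹' closure D
  have hDne : D.Nonempty := ⟨0, zero_mem_feasibleDirections H.map_mem⟩
  refine tendsto_order.2 ⟨fun a ha => ?_, fun a ha => ?_⟩
  · set ε := (infDist u K - a) / (κ + 2)
    have hκ2 : 0 < κ + 2 := by linarith [H.nonneg]
    have hε : 0 < ε := div_pos (sub_pos.2 ha) hκ2
    have hε_def : (κ + 2) * ε = infDist u K - a := mul_div_cancel₀ _ hκ2.ne'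
    filter_upwards [H.eventually_exists_dist_lt_and_infDist_le u hε] with t ⟨v, huv, hv⟩
    have hvK := H.infDist_preimage_closure_le v
    have := mul_le_mul_of_nonneg_left hv H.nonneg
    linarith [infDist_le_infDist_add_dist (x := u) (y := v) (s := K)]
  · set ε := (a - infDist u K) / 3
    have hε : 0 < ε := div_pos (sub_pos.2 ha) (by norm_num)
    have hε_def : 3 * ε = a - infDist u K := mul_div_cancel₀ _ three_ne_zero
    obtain ⟨w, hwK, huw⟩ := (infDist_lt_iff H.nonempty_preimage_closure).1
      (lt_add_of_pos_right (infDist u K) hε)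
    have hw : infDist (A w) D = 0 := (mem_closure_iff_infDist_zero hDne).1 hwK
    filter_upwards [H.eventually_realDiffQuot_le w hε, self_mem_nhdsWithin] with t hq (ht : 0 < t)
    rw [hw, mul_zero, zero_add] at hq
    linarith [realDiffQuot_infDist_le_add (Ω := Ω) x ht u w]

theorem contTangent_eq [CompleteSpace X] (H : IsSubamenableAt Ω x f A Θ κ) :
    contTangent Ω x = A ⁻¹' closure (feasibleDirections Θ (f x)) :=
  contTangent_eq_of_tendsto H.mem (isClosed_closure.preimage A.continuous)
    H.nonempty_preimage_closure H.tendsto_realDiffQuot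

end IsSubamenableAt

end Subamenable

theorem distance_function_subamenable_general
    {X Y : Type*} [NormedAddCommGroup X] [NormedSpace ℝ X] [CompleteSpace X]
    [NormedAddCommGroup Y] [NormedSpace ℝ Y]
    (Ω : Set X) (xb : X) (hxb : xb ∈ Ω)
    (f : X → Y) (Θ : Set Y) (κ : ℝ) (U : Set X)
    (hU : U ∈ 𝓝 xb) (hf : ContDiffAt ℝ 1 f xb)
    (hΘconv : Convex ℝ Θ) (hκ : 0 < κ)
    (hrep : Ω ∩ U = {x ∈ U | f x ∈ Θ})
    (hsub : ∀ x ∈ U, infDist x Ω ≤ κ * infDist (f x) Θ) :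
    (∀ u : X, subDeriv (fun x => ((infDist x Ω : ℝ) : EReal)) xb u =
      ((infDist u (contTangent Ω xb) : ℝ) : EReal)) ∧
    subDiff (fun x => ((infDist x Ω : ℝ) : EReal)) xb =
      subNormal Ω xb ∩ {v : X →L[ℝ] ℝ | ‖v‖ ≤ 1} ∧
    epiDiffAt (fun x => ((infDist x Ω : ℝ) : EReal)) xb ∧
    ∀ u : X, Tendsto (fun t : ℝ => t⁻¹ * (infDist (xb + t • u) Ω - infDist xb Ω))
      (𝓝[>] (0:ℝ)) (𝓝 (infDist u (contTangent Ω xb))) := by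
  have H : IsSubamenableAt Ω xb f (fderiv ℝ f xb) Θ κ :=
    { mem := hxb
      hasFDerivAt := (hf.differentiableAt one_ne_zero).hasFDerivAt
      convex := hΘconv
      nonneg := hκ.le
      eventually_map_mem := by
        filter_upwards [hU] with x hxU hxΩ
        exact (hrep.subset ⟨hxΩ, hxU⟩).2
      eventually_infDist_le := Filter.eventually_of_mem hU hsub }
  have hlim : ∀ u, Tendsto (fun t => realDiffQuot (infDist · Ω) xb t u) (𝓝[>] 0)
      (𝓝 (infDist u (contTangent Ω xb))) := fun u =>
    H.contTangent_eq ▸ H.tendsto_realDiffQuot u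
  have hprod := fun u => (lipschitz_infDist_pt Ω).tendsto_realDiffQuot_prod (hlim u)
  have hsubDeriv := fun u => subDeriv_coe_eq_of_tendsto (hprod u)
  exact ⟨hsubDeriv, subDiff_eq_of_subDeriv_eq_infDist (zero_mem_contTangent hxb) hsubDeriv,
    epiDiffAt_coe_of_tendsto hprod, hlim⟩

/-- generalized differentiation of the distance function to a set
subamenable at `xb` (with subamenability data `Y, f, Θ, κ, U`) in a reflexive
Banach space, together with epi-differentiability and the full-limit formula. -/
theorem distance_function_subamenable
    {X Y : Type*} [NormedAddCommGroup X] [NormedSpace ℝ X] [CompleteSpace X]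
    [NormedAddCommGroup Y] [NormedSpace ℝ Y]
    (hrefl : Function.Surjective ⇑(NormedSpace.inclusionInDoubleDual ℝ X))
    (Ω : Set X) (xb : X) (hxb : xb ∈ Ω) (hΩcl : IsClosed Ω)
    (f : X → Y) (Θ : Set Y) (κ : ℝ) (U : Set X)
    (hU : U ∈ 𝓝 xb) (hf : ContDiffAt ℝ 1 f xb)
    (hΘcl : IsClosed Θ) (hΘconv : Convex ℝ Θ) (hfxb : f xb ∈ Θ) (hκ : 0 < κ)
    (hrep : Ω ∩ U = {x ∈ U | f x ∈ Θ})
    (hsub : ∀ x ∈ U, infDist x Ω ≤ κ * infDist (f x) Θ) :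
    (∀ u : X, subDeriv (fun x => ((infDist x Ω : ℝ) : EReal)) xb u =
      ((infDist u (contTangent Ω xb) : ℝ) : EReal)) ∧
    subDiff (fun x => ((infDist x Ω : ℝ) : EReal)) xb =
      subNormal Ω xb ∩ {v : X →L[ℝ] ℝ | ‖v‖ ≤ 1} ∧
    epiDiffAt (fun x => ((infDist x Ω : ℝ) : EReal)) xb ∧
    ∀ u : X, Tendsto (fun t : ℝ => t⁻¹ * (infDist (xb + t • u) Ω - infDist xb Ω))
      (𝓝[>] (0:ℝ)) (𝓝 (infDist u (contTangent Ω xb))) :=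
  distance_function_subamenable_general Ω xb hxb f Θ κ U hU hf hΘconv hκ hrep hsub
end
end

section
/- Let X be a reflexive Banach space and let Ω ⊂ X be subamenable at x̄ ∈ Ω. Then the Dini–Hadamard subnormal cone is robust at x̄: N⁻_Ω(x̄) = {v ∈ X* : there exist sequences x_k ∈ Ω with x_k → x̄ and v_k ∈ N⁻_Ω(x_k) with v_k converging to v in the weak* topology of X*}. -/
open Filter Topology Set Metric Pointwise

noncomputable section

variable {E : Type*} [NormedAddCommGroup E] [NormedSpace ℝ E]

/-!
Near `x̄`, metric subregularity transfers the constraint to its linearization. A direction `p` with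
`f'(x) p ∈ T_Θ(f x)` is tangent to `Ω` at `x`; and if `f'(x) u` lies within `β` of the cone
generated by `Θ - f x`, difference quotients of `Ω` at `x` come within `κ β` of `u` while their
images under `f'(x)` approach that cone. In a reflexive space a bounded family of them has a weak
cluster point `p`; closed balls and preimages of closed convex sets are weakly closed, so
`‖p - u‖ ≤ κ β` and `f'(x) p` lies in the closed cone, which is contained in `T_Θ(f x)`; hence
`p ∈ T_Ω(x)`. For `u ∈ T_Ω(x̄)` and `x_k → x̄` in `Ω` the distances `β_k` tend to zero, so `u` is
a limit of vectors `p_k ∈ T_Ω(x_k)`. Weak* convergent `v_k` are bounded (Banach–Steinhaus), hence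
`v u = lim v_k u ≤ limsup v_k p_k ≤ 0`.
-/

open NormedSpace

section TangentCone

variable {X : Type*} [NormedAddCommGroup X] [NormedSpace ℝ X]

theorem mem_contTangent_iff_frequently {Ω : Set X} {x u : X} :
    u ∈ contTangent Ω x ↔
      ∀ ε > 0, ∃ᶠ t in 𝓝[>] (0 : ℝ), ∃ w, dist w u < ε ∧ x + t • w ∈ Ω := by
  constructor
  · rintro ⟨t, v, ht, ht0, hv, hmem⟩ ε hε
    have htw : Tendsto t atTop (𝓝[>] 0) := tendsto_nhdsWithin_iff.2 ⟨ht0, .of_forall ht⟩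
    refine htw.frequently (Eventually.frequently ?_)
    filter_upwards [(tendsto_iff_dist_tendsto_zero.1 hv).eventually (gt_mem_nhds hε)] with k hk
    exact ⟨v k, hk, hmem k⟩
  · intro h
    have hn : ∀ n : ℕ, ∃ t w, t ∈ Ioo 0 (1 / ((n : ℝ) + 1)) ∧
        dist w u < 1 / ((n : ℝ) + 1) ∧ x + t • w ∈ Ω := fun n =>
      ((h _ Nat.one_div_pos_of_nat).and_eventually
        (Ioo_mem_nhdsGT (Nat.one_div_pos_of_nat (α := ℝ)))).exists.imp
        fun t ⟨⟨w, hw, hmem⟩, ht⟩ => ⟨w, ht, hw, hmem⟩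
    choose t w ht hw hmem using hn
    have hlim : Tendsto (fun n : ℕ => 1 / ((n : ℝ) + 1)) atTop (𝓝 0) :=
      tendsto_one_div_add_atTop_nhds_zero_nat
    refine ⟨t, w, fun n => (ht n).1, ?_, ?_, hmem⟩
    · exact squeeze_zero (fun n => (ht n).1.le) (fun n => (ht n).2.le) hlim
    · exact tendsto_iff_dist_tendsto_zero.2
        (squeeze_zero (fun _ => dist_nonneg) (fun n => (hw n).le) hlim)

theorem exists_dist_lt_and_add_smul_mem {Ω : Set X} (hΩ : Ω.Nonempty) {x u : X} {t ε : ℝ}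
    (ht : 0 < t) (h : infDist (x + t • u) Ω < t * ε) : ∃ w, dist w u < ε ∧ x + t • w ∈ Ω := by
  obtain ⟨q, hq, hdist⟩ := (infDist_lt_iff hΩ).1 h
  refine ⟨t⁻¹ • (q - x), ?_, by rwa [smul_inv_smul₀ ht.ne', add_sub_cancel]⟩
  have hdiff : t⁻¹ • (q - x) - u = t⁻¹ • (q - (x + t • u)) := by
    rw [smul_sub, smul_sub, smul_add, inv_smul_smul₀ ht.ne']
    abel
  rw [dist_eq_norm, hdiff, norm_smul, Real.norm_of_nonneg (inv_pos.2 ht).le, ← dist_eq_norm,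
    dist_comm, inv_mul_lt_iff₀ ht]
  exact hdist

theorem eventually_forall_smul {p : X → Prop} (hp : ∀ᶠ h in 𝓝 (0 : X), p h) (R : ℝ) :
    ∀ᶠ s in 𝓝[>] (0 : ℝ), ∀ w : X, ‖w‖ ≤ R → p (s • w) := by
  obtain ⟨δ, hδ, hball⟩ := Metric.eventually_nhds_iff_ball.1 hp
  filter_upwards [Ioo_mem_nhdsGT (by positivity : (0 : ℝ) < δ / (|R| + 1))]
    with s ⟨hs0, hs⟩ w hw
  apply hball
  rw [mem_ball_zero_iff, norm_smul, Real.norm_of_nonneg hs0.le]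
  calc s * ‖w‖ ≤ s * (|R| + 1) := by gcongr; linarith [le_abs_self R]
    _ < δ := (lt_div_iff₀ (by positivity)).1 hs

end TangentCone

section Linearization

variable {X Y : Type*} [NormedAddCommGroup X] [NormedSpace ℝ X]
  [NormedAddCommGroup Y] [NormedSpace ℝ Y]

theorem HasFDerivAt.eventually_forall_norm_sub_le {f : X → Y} {A : X →L[ℝ] Y} {x : X}
    (hA : HasFDerivAt f A x) (R : ℝ) {η : ℝ} (hη : 0 < η) :
    ∀ᶠ s in 𝓝[>] (0 : ℝ), ∀ w : X, ‖w‖ ≤ R → ‖f (x + s • w) - f x - s • A w‖ ≤ s * η := by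
  have hR : 0 < |R| + 1 := by positivity
  have hlo := (hasFDerivAt_iff_isLittleO_nhds_zero.1 hA).def (div_pos hη hR)
  filter_upwards [eventually_forall_smul hlo R, self_mem_nhdsWithin] with s hs hs0 w hw
  have hsw := hs w hw
  rw [map_smul, norm_smul, Real.norm_of_nonneg (le_of_lt hs0)] at hsw
  calc _ ≤ η / (|R| + 1) * (s * ‖w‖) := hsw
    _ ≤ η / (|R| + 1) * (s * (|R| + 1)) := by
        gcongr
        · exact le_of_lt hs0
        · linarith [le_abs_self R]
    _ = s * η := by field_simp

end Linearization

section RadialCone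

variable {Y : Type*} [NormedAddCommGroup Y] [NormedSpace ℝ Y]

def radialCone (Θ : Set Y) (y : Y) : Set Y :=
  {w | ∃ l : ℝ, 0 ≤ l ∧ ∃ z ∈ Θ, w = l • (z - y)}

theorem convex_radialCone {Θ : Set Y} (hΘ : Convex ℝ Θ) (y : Y) :
    Convex ℝ (radialCone Θ y) := by
  rintro _ ⟨l₁, hl₁, z₁, hz₁, rfl⟩ _ ⟨l₂, hl₂, z₂, hz₂, rfl⟩ a b ha hb hab
  rcases (by positivity : 0 ≤ a * l₁ + b * l₂).eq_or_lt with hμ | hμ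
  · have h₁ : a * l₁ = 0 := by nlinarith [mul_nonneg ha hl₁, mul_nonneg hb hl₂]
    have h₂ : b * l₂ = 0 := by nlinarith [mul_nonneg ha hl₁, mul_nonneg hb hl₂]
    exact ⟨0, le_rfl, z₁, hz₁, by rw [smul_smul, smul_smul, h₁, h₂]; simp⟩
  · set μ := a * l₁ + b * l₂
    refine ⟨μ, hμ.le, (a * l₁ / μ) • z₁ + (b * l₂ / μ) • z₂,
      hΘ hz₁ hz₂ (by positivity) (by positivity) (by rw [← add_div, div_self hμ.ne']), ?_⟩
    rw [smul_sub μ, smul_add, smul_smul μ, smul_smul μ, mul_div_cancel₀ _ hμ.ne',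
      mul_div_cancel₀ _ hμ.ne']
    module

theorem eventually_add_smul_mem_of_mem_radialCone {Θ : Set Y} (hΘ : Convex ℝ Θ) {y c : Y}
    (hy : y ∈ Θ) (hc : c ∈ radialCone Θ y) : ∀ᶠ t in 𝓝[>] (0 : ℝ), y + t • c ∈ Θ := by
  obtain ⟨l, hl, z, hz, rfl⟩ := hc
  have hsmall : ∀ᶠ t in 𝓝[>] (0 : ℝ), t * l < 1 := nhdsWithin_le_nhds <|
    (continuous_mul_const l).continuousAt.eventually_lt continuousAt_const (by simp)
  filter_upwards [hsmall, self_mem_nhdsWithin] with t ht ht0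
  rw [smul_smul]
  exact hΘ.add_smul_sub_mem hy hz ⟨mul_nonneg (le_of_lt ht0) hl, ht.le⟩

theorem mem_contTangent_of_mem_closure_radialCone {Θ : Set Y} (hΘ : Convex ℝ Θ) {y w : Y}
    (hy : y ∈ Θ) (hw : w ∈ closure (radialCone Θ y)) : w ∈ contTangent Θ y := by
  rw [mem_contTangent_iff_frequently]
  intro ε hε
  obtain ⟨c, hc, hwc⟩ := Metric.mem_closure_iff.1 hw ε hε
  refine Eventually.frequently ?_
  filter_upwards [eventually_add_smul_mem_of_mem_radialCone hΘ hy hc] with t ht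
  exact ⟨c, by rwa [dist_comm], ht⟩

end RadialCone

section Subregularity

variable {X Y : Type*} [NormedAddCommGroup X] [NormedSpace ℝ X]
  [NormedAddCommGroup Y] [NormedSpace ℝ Y]
  {Ω U : Set X} {Θ : Set Y} {f : X → Y} {A : X →L[ℝ] Y} {κ : ℝ} {x₀ : X}

theorem infDist_add_smul_le (hκ : 0 ≤ κ) (hsub : ∀ x ∈ U, infDist x Ω ≤ κ * infDist (f x) Θ)
    {t : ℝ} (ht : 0 ≤ t) {u : X} {c : Y} (hU : x₀ + t • u ∈ U) (hΘ : f x₀ + t • c ∈ Θ) :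
    infDist (x₀ + t • u) Ω ≤ κ * (‖f (x₀ + t • u) - f x₀ - t • A u‖ + t * ‖A u - c‖) := by
  refine (hsub _ hU).trans (mul_le_mul_of_nonneg_left ?_ hκ)
  calc infDist (f (x₀ + t • u)) Θ ≤ ‖f (x₀ + t • u) - (f x₀ + t • c)‖ :=
        (infDist_le_dist_of_mem hΘ).trans_eq (dist_eq_norm (f (x₀ + t • u)) (f x₀ + t • c))
    _ = ‖(f (x₀ + t • u) - f x₀ - t • A u) + t • (A u - c)‖ := by congr 1; module
    _ ≤ _ := (norm_add_le _ _).trans_eq (by rw [norm_smul, Real.norm_of_nonneg ht])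

theorem mem_contTangent_of_apply_mem_contTangent (hκ : 0 ≤ κ) (hx₀ : x₀ ∈ Ω) (hU : U ∈ 𝓝 x₀)
    (hsub : ∀ x ∈ U, infDist x Ω ≤ κ * infDist (f x) Θ) (hA : HasFDerivAt f A x₀) {p : X}
    (hp : A p ∈ contTangent Θ (f x₀)) : p ∈ contTangent Ω x₀ := by
  rw [mem_contTangent_iff_frequently] at hp ⊢
  intro ε hε
  obtain ⟨η, hη, hκη⟩ : ∃ η > 0, κ * (2 * η) < ε := by
    refine ⟨ε / (2 * (κ + 1)), by positivity, ?_⟩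
    rw [show κ * (2 * (ε / (2 * (κ + 1)))) = ε * (κ / (κ + 1)) by field_simp]
    exact mul_lt_of_lt_one_right hε ((div_lt_one (by positivity)).2 (lt_add_one κ))
  have hU₀ : ∀ᶠ h in 𝓝 (0 : X), x₀ + h ∈ U := by rwa [← map_add_left_nhds_zero] at hU
  refine ((hp η hη).and_eventually ((eventually_forall_smul hU₀ ‖p‖).and
    ((hA.eventually_forall_norm_sub_le ‖p‖ hη).and self_mem_nhdsWithin))).mono ?_
  rintro t ⟨⟨c, hc, hmem⟩, htU, htA, ht⟩
  refine exists_dist_lt_and_add_smul_mem ⟨x₀, hx₀⟩ ht ?_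
  calc infDist (x₀ + t • p) Ω
      ≤ κ * (‖f (x₀ + t • p) - f x₀ - t • A p‖ + t * ‖A p - c‖) :=
        infDist_add_smul_le hκ hsub (le_of_lt ht) (htU p le_rfl) hmem
    _ ≤ κ * (t * η + t * η) := by
        rw [← dist_eq_norm (A p) c, dist_comm]
        gcongr
        exact htA p le_rfl
    _ = t * (κ * (2 * η)) := by ring
    _ < t * ε := mul_lt_mul_of_pos_left hκη ht

end Subregularity

section Reflexive

variable {X : Type*} [NormedAddCommGroup X] [NormedSpace ℝ X]

theorem exists_mapClusterPt_toWeakSpace (hrefl : Function.Surjective (inclusionInDoubleDual ℝ X))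
    {w : ℕ → X} (hw : Bornology.IsBounded (range w)) :
    ∃ p : X, MapClusterPt (toWeakSpace ℝ X p) atTop (toWeakSpace ℝ X ∘ w) := by
  have hrange : range (inclusionInDoubleDualWeak ℝ X) = univ := by
    refine eq_univ_of_forall fun Φ => ?_
    obtain ⟨x, hx⟩ := hrefl (WeakDual.toStrongDual Φ)
    exact ⟨toWeakSpace ℝ X x, DFunLike.ext _ _ fun g => congr($hx g)⟩
  have hK := isCompact_closure_of_isBounded ℝ X (toWeakSpace ℝ X '' range w)
    (by rwa [preimage_image_eq _ (toWeakSpace ℝ X).injective]) (by simp [hrange])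
  obtain ⟨P, -, hP⟩ := hK.exists_clusterPt (f := map (toWeakSpace ℝ X ∘ w) atTop)
    (le_principal_iff.2 (mem_map.2 (univ_mem' fun n => subset_closure (mem_image_of_mem _
      (mem_range_self n)))))
  exact ⟨(toWeakSpace ℝ X).symm P, by rwa [LinearEquiv.apply_symm_apply]⟩

theorem mem_of_mapClusterPt_toWeakSpace {ι : Type*} {l : Filter ι} {w : ι → X} {p : X}
    (hp : MapClusterPt (toWeakSpace ℝ X p) l (toWeakSpace ℝ X ∘ w)) {C : Set X}
    (hC : Convex ℝ C) (hCcl : IsClosed C) (hw : ∀ᶠ n in l, w n ∈ C) : p ∈ C := by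
  have hpC := hp.mem_closure_of_mem (toWeakSpace ℝ X '' C)
    (mem_map.2 (hw.mono fun _ hn => mem_image_of_mem _ hn))
  rw [← hC.toWeakSpace_closure ℝ, hCcl.closure_eq] at hpC
  exact (toWeakSpace ℝ X).injective.mem_set_image.1 hpC

end Reflexive

section Subamenable

variable {X Y : Type*} [NormedAddCommGroup X] [NormedSpace ℝ X]
  [NormedAddCommGroup Y] [NormedSpace ℝ Y]
  {Ω U : Set X} {Θ : Set Y} {f : X → Y} {A : X →L[ℝ] Y} {κ : ℝ} {x₀ : X}

theorem exists_norm_sub_lt_and_norm_apply_sub_le (hκ : 0 ≤ κ) (hΘ : Convex ℝ Θ) (hx₀ : x₀ ∈ Ω)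
    (hU : U ∈ 𝓝 x₀) (hrep : Ω ∩ U ⊆ f ⁻¹' Θ)
    (hsub : ∀ x ∈ U, infDist x Ω ≤ κ * infDist (f x) Θ) (hA : HasFDerivAt f A x₀) (u : X)
    {c : Y} (hc : c ∈ radialCone Θ (f x₀)) {η : ℝ} (hη : 0 < η) :
    ∃ w, ‖w - u‖ < κ * ‖A u - c‖ + η ∧ ∃ d ∈ radialCone Θ (f x₀), ‖A w - d‖ ≤ η := by
  set R := ‖u‖ + (κ * ‖A u - c‖ + η)
  have hη' : 0 < η / (κ + 1) := by positivity
  have hU₀ : ∀ᶠ h in 𝓝 (0 : X), x₀ + h ∈ U := by rwa [← map_add_left_nhds_zero] at hU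
  obtain ⟨s, hsΘ, hsU, hsA, hs⟩ :=
    ((eventually_add_smul_mem_of_mem_radialCone hΘ (hrep ⟨hx₀, mem_of_mem_nhds hU⟩) hc).and
      ((eventually_forall_smul hU₀ R).and ((hA.eventually_forall_norm_sub_le R hη').and
        self_mem_nhdsWithin))).exists
  replace hs : 0 < s := hs
  have huR : ‖u‖ ≤ R := by simp only [R]; nlinarith [norm_nonneg (A u - c)]
  have hdist : infDist (x₀ + s • u) Ω < s * (κ * ‖A u - c‖ + η) :=
    calc infDist (x₀ + s • u) Ω
        ≤ κ * (‖f (x₀ + s • u) - f x₀ - s • A u‖ + s * ‖A u - c‖) :=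
          infDist_add_smul_le hκ hsub hs.le (hsU u huR) hsΘ
      _ ≤ κ * (s * (η / (κ + 1)) + s * ‖A u - c‖) := by gcongr; exact hsA u huR
      _ = s * (κ * ‖A u - c‖ + η * (κ / (κ + 1))) := by ring
      _ < s * (κ * ‖A u - c‖ + η) := by
          gcongr
          exact mul_lt_of_lt_one_right hη ((div_lt_one (by positivity)).2 (lt_add_one κ))
  obtain ⟨w, hwu, hwΩ⟩ := exists_dist_lt_and_add_smul_mem ⟨x₀, hx₀⟩ hs hdist
  rw [dist_eq_norm] at hwu
  have hwR : ‖w‖ ≤ R := by linarith [norm_le_norm_add_norm_sub' w u]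
  refine ⟨w, hwu, s⁻¹ • (f (x₀ + s • w) - f x₀),
    ⟨s⁻¹, by positivity, _, hrep ⟨hwΩ, hsU w hwR⟩, rfl⟩, ?_⟩
  calc ‖A w - s⁻¹ • (f (x₀ + s • w) - f x₀)‖
      = ‖s⁻¹ • (f (x₀ + s • w) - f x₀ - s • A w)‖ := by
        rw [norm_sub_rev, smul_sub s⁻¹ _ (s • A w), inv_smul_smul₀ hs.ne']
    _ = s⁻¹ * ‖f (x₀ + s • w) - f x₀ - s • A w‖ := by
        rw [norm_smul, Real.norm_of_nonneg (inv_pos.2 hs).le]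
    _ ≤ s⁻¹ * (s * (η / (κ + 1))) := by gcongr; exact hsA w hwR
    _ = η / (κ + 1) := by field_simp
    _ ≤ η := div_le_self hη.le (by linarith)

theorem exists_mem_contTangent_norm_sub_le
    (hrefl : Function.Surjective (inclusionInDoubleDual ℝ X)) (hκ : 0 ≤ κ) (hΘ : Convex ℝ Θ)
    (hx₀ : x₀ ∈ Ω) (hU : U ∈ 𝓝 x₀) (hrep : Ω ∩ U ⊆ f ⁻¹' Θ)
    (hsub : ∀ x ∈ U, infDist x Ω ≤ κ * infDist (f x) Θ) (hA : HasFDerivAt f A x₀) (u : X)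
    {c : Y} (hc : c ∈ radialCone Θ (f x₀)) :
    ∃ p ∈ contTangent Ω x₀, ‖p - u‖ ≤ κ * ‖A u - c‖ := by
  choose w hwu d hd hwd using fun n : ℕ =>
    exists_norm_sub_lt_and_norm_apply_sub_le hκ hΘ hx₀ hU hrep hsub hA u hc
      (Nat.one_div_pos_of_nat (n := n) (α := ℝ))
  have hsmall : ∀ η > 0, ∀ᶠ n : ℕ in atTop, 1 / ((n : ℝ) + 1) ≤ η := fun η hη =>
    tendsto_one_div_add_atTop_nhds_zero_nat.eventually (ge_mem_nhds hη)
  have hbdd : Bornology.IsBounded (range w) := by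
    refine isBounded_iff_forall_norm_le.2 ⟨‖u‖ + (κ * ‖A u - c‖ + 1), ?_⟩
    rintro _ ⟨n, rfl⟩
    have : 1 / ((n : ℝ) + 1) ≤ 1 := div_le_one_of_le₀ (by linarith [n.cast_nonneg (α := ℝ)])
      (by positivity)
    linarith [norm_le_norm_add_norm_sub' (w n) u, hwu n]
  obtain ⟨p, hp⟩ := exists_mapClusterPt_toWeakSpace hrefl hbdd
  have hpu : ‖p - u‖ ≤ κ * ‖A u - c‖ := by
    refine le_of_forall_pos_le_add fun η hη => ?_
    have hpB := mem_of_mapClusterPt_toWeakSpace hp (convex_closedBall u (κ * ‖A u - c‖ + η))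
      isClosed_closedBall <| by
        filter_upwards [hsmall η hη] with n hn
        rw [mem_closedBall, dist_eq_norm]
        linarith [hwu n]
    rwa [mem_closedBall, dist_eq_norm] at hpB
  have hAp : A p ∈ closure (radialCone Θ (f x₀)) := by
    rw [closure_eq_iInter_cthickening, mem_iInter₂]
    intro η hη
    refine mem_of_mapClusterPt_toWeakSpace hp (C := A ⁻¹' cthickening η (radialCone Θ (f x₀)))
      (((convex_radialCone hΘ _).cthickening η).linear_preimage A.toLinearMap)
      (isClosed_cthickening.preimage A.continuous) ?_
    filter_upwards [hsmall η hη] with n hn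
    exact mem_cthickening_of_dist_le _ _ _ _ (hd n) (by rw [dist_eq_norm]; exact (hwd n).trans hn)
  have hfx₀ : f x₀ ∈ Θ := hrep ⟨hx₀, mem_of_mem_nhds hU⟩
  exact ⟨p, mem_contTangent_of_apply_mem_contTangent hκ hx₀ hU hsub hA
    (mem_contTangent_of_mem_closure_radialCone hΘ hfx₀ hAp), hpu⟩

end Subamenable

section Robustness

variable {X Y : Type*} [NormedAddCommGroup X] [NormedSpace ℝ X]
  [NormedAddCommGroup Y] [NormedSpace ℝ Y]

theorem eventually_exists_mem_radialCone_norm_sub_lt {Ω U : Set X} {Θ : Set Y} {f : X → Y}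
    {A : X →L[ℝ] Y} {x u : X} (hA : HasFDerivAt f A x) (hU : U ∈ 𝓝 x)
    (hrep : Ω ∩ U ⊆ f ⁻¹' Θ) (hu : u ∈ contTangent Ω x) {ι : Type*} {l : Filter ι}
    {y : ι → Y} {B : ι → X →L[ℝ] Y} (hy : Tendsto y l (𝓝 (f x))) (hB : Tendsto B l (𝓝 A))
    {ε : ℝ} (hε : 0 < ε) : ∀ᶠ i in l, ∃ c ∈ radialCone Θ (y i), ‖B i u - c‖ < ε := by
  obtain ⟨t, v, ht, ht0, hv, hmem⟩ := hu
  have htv : Tendsto (fun j => t j • v j) atTop (𝓝 0) := by simpa using ht0.smul hv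
  have hquot : Tendsto (fun j => (t j)⁻¹ • (f (x + t j • v j) - f x)) atTop (𝓝 (A u)) :=
    hA.hasFDerivWithinAt.lim (s := univ) htv (univ_mem' fun _ => mem_univ _)
      (by simpa only [inv_smul_smul₀ (ht _).ne'] using hv)
  have hxU : ∀ᶠ j in atTop, x + t j • v j ∈ U := by
    have : Tendsto (fun j => x + t j • v j) atTop (𝓝 x) := by
      simpa using tendsto_const_nhds.add htv
    exact this.eventually hU
  obtain ⟨j, hjU, hj⟩ := (hxU.and (hquot.eventually (ball_mem_nhds (A u) hε))).exists
  have hlim : Tendsto (fun i => B i u - (t j)⁻¹ • (f (x + t j • v j) - y i)) l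
      (𝓝 (A u - (t j)⁻¹ • (f (x + t j • v j) - f x))) :=
    ((ContinuousLinearMap.apply ℝ Y u).continuous.tendsto A |>.comp hB).sub
      ((tendsto_const_nhds.sub hy).const_smul _)
  rw [dist_eq_norm, norm_sub_rev] at hj
  filter_upwards [hlim.norm.eventually (gt_mem_nhds hj)] with i hi
  exact ⟨_, ⟨(t j)⁻¹, (inv_pos.2 (ht j)).le, _, hrep ⟨hmem j, hjU⟩, rfl⟩, hi⟩

theorem eventually_exists_mem_contTangent_norm_sub_le
    (hrefl : Function.Surjective (inclusionInDoubleDual ℝ X)) {Ω U : Set X} {Θ : Set Y}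
    {f : X → Y} {κ : ℝ} {xb : X} (hκ : 0 ≤ κ) (hΘ : Convex ℝ Θ) (hU : U ∈ 𝓝 xb)
    (hf : ContDiffAt ℝ 1 f xb) (hrep : Ω ∩ U ⊆ f ⁻¹' Θ)
    (hsub : ∀ x ∈ U, infDist x Ω ≤ κ * infDist (f x) Θ) {x : ℕ → X} (hxΩ : ∀ k, x k ∈ Ω)
    (hx : Tendsto x atTop (𝓝 xb)) {u : X} (hu : u ∈ contTangent Ω xb) {ε : ℝ} (hε : 0 < ε) :
    ∀ᶠ k in atTop, ∃ p ∈ contTangent Ω (x k), ‖p - u‖ ≤ ε := by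
  have hdiff : ∀ᶠ y in 𝓝 xb, HasFDerivAt f (fderiv ℝ f y) y :=
    (hf.eventually (by simp)).mono fun y hy => (hy.differentiableAt one_ne_zero).hasFDerivAt
  have hcont : ContinuousAt (fderiv ℝ f) xb := (hf.fderiv_right (m := 0) le_rfl).continuousAt
  have hcone := eventually_exists_mem_radialCone_norm_sub_lt hdiff.self_of_nhds hU hrep hu
    (hf.continuousAt.tendsto.comp hx) (hcont.tendsto.comp hx) (by positivity : 0 < ε / (κ + 1))
  filter_upwards [hx.eventually hdiff, hx.eventually (eventually_eventually_nhds.2 hU), hcone]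
    with k hdk hUk ⟨c, hc, hck⟩
  obtain ⟨p, hp, hpu⟩ :=
    exists_mem_contTangent_norm_sub_le hrefl hκ hΘ (hxΩ k) hUk hrep hsub hdk u hc
  refine ⟨p, hp, hpu.trans ?_⟩
  calc κ * ‖fderiv ℝ f (x k) u - c‖ ≤ κ * (ε / (κ + 1)) := by gcongr; exact hck.le
    _ ≤ ε := by
        rw [mul_div_assoc', div_le_iff₀ (by positivity)]
        nlinarith

theorem mem_subNormal_of_tendsto [CompleteSpace X] {Ω : Set X} {xb : X} {x : ℕ → X}
    {vs : ℕ → X →L[ℝ] ℝ} {v : X →L[ℝ] ℝ} (hvs : ∀ k, vs k ∈ subNormal Ω (x k))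
    (hv : ∀ z, Tendsto (fun k => vs k z) atTop (𝓝 (v z)))
    (hT : ∀ u ∈ contTangent Ω xb, ∀ ε > 0,
      ∀ᶠ k in atTop, ∃ p ∈ contTangent Ω (x k), ‖p - u‖ ≤ ε) :
    v ∈ subNormal Ω xb := by
  obtain ⟨M, hM⟩ : ∃ M, ∀ k, ‖vs k‖ ≤ M := banach_steinhaus fun z => by
    obtain ⟨C, hC⟩ := (hv z).norm.bddAbove_range
    exact ⟨C, fun k => hC ⟨k, rfl⟩⟩
  have hM₁ : 0 < |M| + 1 := by positivity
  intro u hu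
  refine le_of_forall_pos_le_add fun ε hε => le_of_tendsto (hv u) ?_
  filter_upwards [hT u hu (ε / (|M| + 1)) (by positivity)] with k ⟨p, hp, hpu⟩
  calc vs k u = vs k p + vs k (u - p) := by rw [map_sub]; ring
    _ ≤ 0 + ‖vs k‖ * ‖u - p‖ := add_le_add (hvs k p hp) ((le_abs_self _).trans ((vs k).le_opNorm _))
    _ ≤ 0 + (|M| + 1) * (ε / (|M| + 1)) := by
        rw [norm_sub_rev]
        gcongr
        linarith [hM k, le_abs_self M]
    _ = 0 + ε := by field_simp

end Robustness

theorem subnormal_robust_of_subamenable_general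
    {X Y : Type*} [NormedAddCommGroup X] [NormedSpace ℝ X] [CompleteSpace X]
    [NormedAddCommGroup Y] [NormedSpace ℝ Y]
    (hrefl : Function.Surjective ⇑(NormedSpace.inclusionInDoubleDual ℝ X))
    (Ω : Set X) (xb : X) (hxb : xb ∈ Ω)
    (f : X → Y) (Θ : Set Y) (κ : ℝ) (U : Set X)
    (hU : U ∈ 𝓝 xb) (hf : ContDiffAt ℝ 1 f xb)
    (hΘconv : Convex ℝ Θ) (hκ : 0 < κ)
    (hrep : Ω ∩ U = {x ∈ U | f x ∈ Θ})
    (hsub : ∀ x ∈ U, infDist x Ω ≤ κ * infDist (f x) Θ) :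
    subNormal Ω xb =
      {v : X →L[ℝ] ℝ | ∃ x : ℕ → X, ∃ vs : ℕ → (X →L[ℝ] ℝ),
        (∀ k, x k ∈ Ω) ∧ Tendsto x atTop (𝓝 xb) ∧
        (∀ k, vs k ∈ subNormal Ω (x k)) ∧
        ∀ z : X, Tendsto (fun k => vs k z) atTop (𝓝 (v z))} := by
  have hΩΘ : Ω ∩ U ⊆ f ⁻¹' Θ := fun y hy => (hrep ▸ hy).2
  refine Subset.antisymm (fun v hv => ⟨fun _ => xb, fun _ => v, fun _ => hxb,
    tendsto_const_nhds, fun _ => hv, fun _ => tendsto_const_nhds⟩) ?_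
  rintro v ⟨x, vs, hxΩ, hx, hvs, hv⟩
  exact mem_subNormal_of_tendsto hvs hv fun u hu ε hε =>
    eventually_exists_mem_contTangent_norm_sub_le hrefl hκ.le hΘconv hU hf hΩΘ hsub hxΩ hx hu hε

/-- robustness of the subnormal cone to a set subamenable at `xb`
(with subamenability data `Y, f, Θ, κ, U`) in a reflexive Banach space. -/
theorem subnormal_robust_of_subamenable
    {X Y : Type*} [NormedAddCommGroup X] [NormedSpace ℝ X] [CompleteSpace X]
    [NormedAddCommGroup Y] [NormedSpace ℝ Y]
    (hrefl : Function.Surjective ⇑(NormedSpace.inclusionInDoubleDual ℝ X))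
    (Ω : Set X) (xb : X) (hxb : xb ∈ Ω) (hΩcl : IsClosed Ω)
    (f : X → Y) (Θ : Set Y) (κ : ℝ) (U : Set X)
    (hU : U ∈ 𝓝 xb) (hf : ContDiffAt ℝ 1 f xb)
    (hΘcl : IsClosed Θ) (hΘconv : Convex ℝ Θ) (hfxb : f xb ∈ Θ) (hκ : 0 < κ)
    (hrep : Ω ∩ U = {x ∈ U | f x ∈ Θ})
    (hsub : ∀ x ∈ U, infDist x Ω ≤ κ * infDist (f x) Θ) :
    subNormal Ω xb =
      {v : X →L[ℝ] ℝ | ∃ x : ℕ → X, ∃ vs : ℕ → (X →L[ℝ] ℝ),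
        (∀ k, x k ∈ Ω) ∧ Tendsto x atTop (𝓝 xb) ∧
        (∀ k, vs k ∈ subNormal Ω (x k)) ∧
        ∀ z : X, Tendsto (fun k => vs k z) atTop (𝓝 (v z))} :=
  subnormal_robust_of_subamenable_general hrefl Ω xb hxb f Θ κ U hU hf hΘconv hκ hrep hsub
end
end

section
/- Let X and Y be normed spaces, let ϑ : X → (-∞,∞] be locally Lipschitz continuous around x̄ and epi-differentiable at x̄, let f : X → Y be continuously differentiable around x̄, and let Θ ⊂ Y be locally closed around ȳ := f(x̄) ∈ Θ. Suppose x̄ is a local minimizer of the problem: minimize ϑ(x) subject to f(x) ∈ Θ, and that the Abadie constraint qualification T_Ω(x̄) = {u ∈ X : ∇f(x̄)u ∈ T_Θ(ȳ)} holds, where Ω := {x ∈ X : f(x) ∈ Θ}. Then for every u ∈ X with ∇f(x̄)u ∈ T_Θ(ȳ) one has dϑ(x̄)(u) ≥ 0. -/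
open Filter Topology Set Metric Pointwise

noncomputable section

variable {E : Type*} [NormedAddCommGroup E] [NormedSpace ℝ E]

/-!
Move along a tangent direction `u = lim vₖ` of the feasible set with steps `x̄ + tₖ vₖ ∈ Ω`.
Epi-differentiability supplies, along the same `tₖ`, directions `wₖ → u` whose difference
quotients are eventually below any `r ≥ dϑ(x̄)(u)`. Local minimality and the Lipschitz bound
give `tₖ⁻¹ (ϑ(x̄ + tₖ wₖ) - ϑ(x̄)) ≥ -ℓ ‖vₖ - wₖ‖ → 0`, so `r ≥ 0`. The Abadie qualification
identifies the linearized cone with the tangent cone of `Ω`.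
-/

lemma tendsto_add_smul_of_tendsto_zero {ι : Type*} {l : Filter ι} {t : ι → ℝ} {v : ι → E}
    {x u : E} (ht : Tendsto t l (𝓝 0)) (hv : Tendsto v l (𝓝 u)) :
    Tendsto (fun k => x + t k • v k) l (𝓝 x) := by
  simpa using tendsto_const_nhds.add (ht.smul hv)

lemma diffQuot_eq_coe {φ : E → EReal} {x w : E} {t a b : ℝ}
    (ha : φ (x + t • w) = a) (hb : φ x = b) :
    diffQuot φ x t w = ((t⁻¹ * (a - b) : ℝ) : EReal) := by
  rw [diffQuot, ha, hb, EReal.coe_mul, EReal.coe_sub]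

lemma LocLipschitzAt.exists_toReal {F : Type*} [NormedAddCommGroup F] {φ : F → EReal} {x : F}
    (hφ : LocLipschitzAt φ x) (hx : φ x ≠ ⊥) : ∃ ℓ : ℝ, ∃ U ∈ 𝓝 x, (∀ z ∈ U, φ z = (φ z).toReal) ∧
      ∀ z ∈ U, ∀ w ∈ U, (φ z).toReal - (φ w).toReal ≤ ℓ * ‖z - w‖ := by
  obtain ⟨ℓ, U, hU, hfin, hlip⟩ := hφ
  have hreal : ∀ z ∈ U, φ z = (φ z).toReal := by
    intro z hz
    refine (EReal.coe_toReal (hfin z hz) fun hbot => ?_).symm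
    have := hlip x (mem_of_mem_nhds hU) z hz
    rw [hbot, EReal.sub_bot hx] at this
    exact EReal.coe_ne_top _ (top_le_iff.mp this)
  refine ⟨ℓ, U, hU, hreal, fun z hz w hw => ?_⟩
  have := hlip z hz w hw
  rw [hreal z hz, hreal w hw, ← EReal.coe_sub] at this
  exact_mod_cast this

lemma epiDiffAt.exists_tendsto_diffQuot_le {φ : E → EReal} {x u : E} {r : ℝ}
    (hφ : epiDiffAt φ x) (hr : subDeriv φ x u ≤ r) {t : ℕ → ℝ} (ht₀ : ∀ k, 0 < t k)
    (ht : Tendsto t atTop (𝓝 0)) :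
    ∃ w : ℕ → E, ∃ s : ℕ → ℝ, Tendsto w atTop (𝓝 u) ∧ Tendsto s atTop (𝓝 r) ∧
      ∀ᶠ k in atTop, diffQuot φ x (t k) (w k) ≤ s k := by
  have hmem : (u, r) ∈ innerLim fun t => epiSet (diffQuot φ x t) := by
    rw [hφ.2]
    exact hr
  obtain ⟨p, hp, hpS⟩ := hmem t ht₀ ht
  exact ⟨fun k => (p k).1, fun k => (p k).2, (continuous_fst.tendsto _).comp hp,
    (continuous_snd.tendsto _).comp hp, hpS⟩

theorem subDeriv_nonneg_of_mem_contTangent {φ : E → EReal} {Ω : Set E} {x u : E}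
    (hx : φ x ≠ ⊥) (hlip : LocLipschitzAt φ x) (hepi : epiDiffAt φ x)
    (hmin : ∃ U ∈ 𝓝 x, ∀ z ∈ U, z ∈ Ω → φ x ≤ φ z) (hu : u ∈ contTangent Ω x) :
    0 ≤ subDeriv φ x u := by
  by_contra! hneg
  obtain ⟨r, hr, hr₀⟩ := EReal.exists_between_coe_real hneg
  obtain ⟨t, v, ht₀, ht, hv, hvΩ⟩ := hu
  obtain ⟨w, s, hw, hs, hws⟩ := hepi.exists_tendsto_diffQuot_le hr.le ht₀ ht
  obtain ⟨ℓ, U, hU, hreal, hℓ⟩ := hlip.exists_toReal hx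
  obtain ⟨V, hV, hminV⟩ := hmin
  set g : E → ℝ := fun z => (φ z).toReal
  have hxv := tendsto_add_smul_of_tendsto_zero (x := x) ht hv
  have hxw := tendsto_add_smul_of_tendsto_zero (x := x) ht hw
  have hquot : ∀ᶠ k in atTop, -(ℓ * ‖v k - w k‖) ≤ s k := by
    filter_upwards [hxv.eventually_mem hU, hxv.eventually_mem hV, hxw.eventually_mem hU, hws]
      with k hvU hvV hwU hk
    have hgmin : g x ≤ g (x + t k • v k) := by
      have := hminV _ hvV (hvΩ k)
      rwa [hreal x (mem_of_mem_nhds hU), hreal _ hvU, EReal.coe_le_coe_iff] at this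
    have hglip : g (x + t k • v k) - g (x + t k • w k) ≤ ℓ * (t k * ‖v k - w k‖) := by
      have := hℓ _ hvU _ hwU
      rwa [add_sub_add_left_eq_sub, ← smul_sub, norm_smul, Real.norm_of_nonneg (ht₀ k).le]
        at this
    have hgquot : (t k)⁻¹ * (g (x + t k • w k) - g x) ≤ s k := by
      rwa [diffQuot_eq_coe (hreal _ hwU) (hreal x (mem_of_mem_nhds hU)),
        EReal.coe_le_coe_iff] at hk
    have htk := ht₀ k
    calc -(ℓ * ‖v k - w k‖) = (t k)⁻¹ * -(ℓ * (t k * ‖v k - w k‖)) := by field_simp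
      _ ≤ (t k)⁻¹ * (g (x + t k • w k) - g x) := by gcongr; linarith
      _ ≤ s k := hgquot
  have hlim : Tendsto (fun k => -(ℓ * ‖v k - w k‖)) atTop (𝓝 0) := by
    simpa using ((hv.sub hw).norm.const_mul ℓ).neg
  have : (0 : ℝ) ≤ r := le_of_tendsto_of_tendsto hlim hs hquot
  exact hr₀.not_ge (EReal.coe_nonneg.mpr this)

theorem primal_necessary_optimality_AQC_general
    {X Y : Type*} [NormedAddCommGroup X] [NormedSpace ℝ X]
    [NormedAddCommGroup Y] [NormedSpace ℝ Y]
    (ϑ : X → EReal) (f : X → Y) (f' : X →L[ℝ] Y) (Θ : Set Y) (xb : X)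
    (hϑbot : ∀ x, ϑ x ≠ ⊥)
    (hϑlip : LocLipschitzAt ϑ xb) (hϑepi : epiDiffAt ϑ xb)
    (hmin : ∃ U ∈ 𝓝 xb, ∀ x ∈ U, f x ∈ Θ → ϑ xb ≤ ϑ x)
    (hAQC : contTangent {x | f x ∈ Θ} xb =
      {u : X | f' u ∈ contTangent Θ (f xb)}) :
    ∀ u : X, f' u ∈ contTangent Θ (f xb) → (0 : EReal) ≤ subDeriv ϑ xb u :=
  fun _ hu => subDeriv_nonneg_of_mem_contTangent (hϑbot xb) hϑlip hϑepi hmin (hAQC ▸ hu)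

/-- primal necessary optimality conditions under the Abadie
constraint qualification. -/
theorem primal_necessary_optimality_AQC
    {X Y : Type*} [NormedAddCommGroup X] [NormedSpace ℝ X]
    [NormedAddCommGroup Y] [NormedSpace ℝ Y]
    (ϑ : X → EReal) (f : X → Y) (f' : X →L[ℝ] Y) (Θ : Set Y) (xb : X)
    (hϑbot : ∀ x, ϑ x ≠ ⊥)
    (hϑlip : LocLipschitzAt ϑ xb) (hϑepi : epiDiffAt ϑ xb)
    (hf : ContDiffAt ℝ 1 f xb) (hf' : HasFDerivAt f f' xb)
    (hΘloc : ∃ V ∈ 𝓝 (f xb), IsClosed (Θ ∩ V))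
    (hfeas : f xb ∈ Θ)
    (hmin : ∃ U ∈ 𝓝 xb, ∀ x ∈ U, f x ∈ Θ → ϑ xb ≤ ϑ x)
    (hAQC : contTangent {x | f x ∈ Θ} xb =
      {u : X | f' u ∈ contTangent Θ (f xb)}) :
    ∀ u : X, f' u ∈ contTangent Θ (f xb) → (0 : EReal) ≤ subDeriv ϑ xb u :=
  primal_necessary_optimality_AQC_general ϑ f f' Θ xb hϑbot hϑlip hϑepi hmin hAQC
end
end

section
/- Let X and Y be normed spaces and let x̄ be a local minimizer of the problem: minimize ϑ(x) subject to f(x) ∈ Θ, where ϑ : X → ℝ is continuously differentiable around x̄, f : X → Y is continuously differentiable around x̄, Θ ⊂ Y is convex and locally closed around ȳ := f(x̄) ∈ Θ, and there exist κ > 0 and a neighborhood U of x̄ with dist(x; Ω) ≤ κ·dist(f(x); Θ) for all x ∈ U, where Ω := {x ∈ X : f(x) ∈ Θ}. Then there exists λ ∈ Y* such that ∇ϑ(x̄) + ∇f(x̄)*λ = 0, λ ∈ N_Θ(ȳ), and ‖λ‖ ≤ κ‖∇ϑ(x̄)‖. -/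
/-! Let `K` be the cone generated by `Θ - ȳ`. For `k ∈ K` the point `ȳ + t k` lies in `Θ` once
`t > 0` is small, so along a ray `dist (f (x̄ + t u)) Θ ≤ t · dist (f' u) K + o(t)`. Metric
subregularity turns this into `dist (x̄ + t u) Ω ≤ κ t · dist (f' u) K + o(t)`, and comparing `ϑ`
at a nearby feasible point with its first-order expansion at `x̄` gives
`-ϑ' u ≤ κ ‖ϑ'‖ · dist (f' u) K`. The right-hand side is a sublinear function of `f' u`, so
Hahn–Banach extends `-ϑ' ∘ f'⁻¹` from the range of `f'` to a functional `λ` dominated by it; the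
domination yields both `‖λ‖ ≤ κ ‖ϑ'‖` and `λ ≤ 0` on `K ⊇ Θ - ȳ`. -/

open Filter Topology Set Metric Pointwise

noncomputable section

variable {E : Type*} [NormedAddCommGroup E] [NormedSpace ℝ E]

theorem LinearMap.exists_comp_eq_of_le_sublinear {X Y : Type*} [AddCommGroup X] [Module ℝ X]
    [AddCommGroup Y] [Module ℝ Y] (T : X →ₗ[ℝ] Y) (ℓ : X →ₗ[ℝ] ℝ) (N : Y → ℝ)
    (N_hom : ∀ c : ℝ, 0 < c → ∀ y, N (c • y) = c * N y) (N_add : ∀ y z, N (y + z) ≤ N y + N z)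
    (hℓ : ∀ x, ℓ x ≤ N (T x)) :
    ∃ g : Y →ₗ[ℝ] ℝ, g ∘ₗ T = ℓ ∧ ∀ y, g y ≤ N y := by
  have N_zero : N 0 = 0 := by
    have := N_hom 2 two_pos 0
    rw [smul_zero] at this
    linarith
  have hker : LinearMap.ker T ≤ LinearMap.ker ℓ := fun x hx => by
    have h₁ := hℓ x
    have h₂ := hℓ (-x)
    rw [LinearMap.mem_ker] at hx ⊢
    rw [hx, N_zero] at h₁
    rw [map_neg, map_neg, hx, neg_zero, N_zero] at h₂
    linarith
  let ℓR : LinearMap.range T →ₗ[ℝ] ℝ :=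
    (LinearMap.ker T).liftQ ℓ hker ∘ₗ T.quotKerEquivRange.symm.toLinearMap
  have ℓR_apply (x : X) : ℓR ⟨T x, mem_range_self T x⟩ = ℓ x := by
    simp [ℓR, quotKerEquivRange_symm_apply_image]
  obtain ⟨g, hgℓ, hgN⟩ := exists_extension_of_le_sublinear ⟨LinearMap.range T, ℓR⟩ N N_hom N_add
    (by rintro ⟨_, x, rfl⟩; exact (ℓR_apply x).trans_le (hℓ x))
  exact ⟨g, LinearMap.ext fun x => (hgℓ ⟨T x, mem_range_self T x⟩).trans (ℓR_apply x), hgN⟩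

section Normed

variable {X Y : Type*} [NormedAddCommGroup X] [NormedSpace ℝ X]
  [NormedAddCommGroup Y] [NormedSpace ℝ Y]

theorem ContinuousLinearMap.exists_comp_eq_of_le_sublinear (T : X →L[ℝ] Y) (ℓ : X →L[ℝ] ℝ)
    (N : Y → ℝ) {C : ℝ} (hC : 0 ≤ C) (N_hom : ∀ c : ℝ, 0 < c → ∀ y, N (c • y) = c * N y)
    (N_add : ∀ y z, N (y + z) ≤ N y + N z) (N_le : ∀ y, N y ≤ C * ‖y‖)
    (hℓ : ∀ x, ℓ x ≤ N (T x)) :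
    ∃ g : Y →L[ℝ] ℝ, g.comp T = ℓ ∧ (∀ y, g y ≤ N y) ∧ ‖g‖ ≤ C := by
  obtain ⟨g, hgT, hgN⟩ := (T : X →ₗ[ℝ] Y).exists_comp_eq_of_le_sublinear ℓ N N_hom N_add hℓ
  have hg (y : Y) : ‖g y‖ ≤ C * ‖y‖ := by
    rw [Real.norm_eq_abs, abs_le]
    constructor
    · have := (hgN (-y)).trans (N_le (-y))
      rw [map_neg, norm_neg] at this
      linarith
    · exact (hgN y).trans (N_le y)
  refine ⟨g.mkContinuous C hg, ?_, hgN, LinearMap.mkContinuous_norm_le g hC hg⟩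
  ext x
  exact LinearMap.congr_fun hgT x

theorem ConvexCone.infDist_smul (K : ConvexCone ℝ Y) {c : ℝ} (hc : 0 < c) (v : Y) :
    infDist (c • v) K = c * infDist v K := by
  have hK : c • (K : Set Y) = K := by
    refine (Set.smul_set_subset_iff.2 fun _ hk => K.smul_mem hc hk).antisymm fun k hk => ?_
    exact ⟨c⁻¹ • k, K.smul_mem (inv_pos.2 hc) hk, smul_inv_smul₀ hc.ne' k⟩
  rw [← hK, infDist_smul₀ hc.ne', Real.norm_of_nonneg hc.le, hK]

theorem ConvexCone.infDist_add_le (K : ConvexCone ℝ Y) (hK : (K : Set Y).Nonempty) (v w : Y) :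
    infDist (v + w) K ≤ infDist v K + infDist w K := by
  have : Nonempty K := hK.to_subtype
  rw [infDist_eq_iInf (x := v), infDist_eq_iInf (x := w)]
  exact le_ciInf_add_ciInf fun (a b : K) =>
    (infDist_le_dist_of_mem (K.add_mem a.2 b.2)).trans (dist_add_add_le _ _ _ _)

/-- For convex `Θ ∋ y`, its closure is the tangent cone of `Θ` at `y`. -/
def feasibleCone (Θ : Set Y) (y : Y) : ConvexCone ℝ Y := ConvexCone.hull ℝ (Θ - {y})

theorem sub_mem_feasibleCone {Θ : Set Y} {y z : Y} (hz : z ∈ Θ) : z - y ∈ feasibleCone Θ y :=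
  ConvexCone.subset_hull (Set.sub_mem_sub hz rfl)

theorem Convex.exists_of_mem_feasibleCone {Θ : Set Y} (hΘ : Convex ℝ Θ) {y k : Y}
    (hk : k ∈ feasibleCone Θ y) : ∃ r : ℝ, 0 < r ∧ ∃ z ∈ Θ, k = r • (z - y) := by
  obtain ⟨r, hr, _, ⟨z, hz, y', hy', rfl⟩, rfl⟩ :=
    (ConvexCone.mem_hull_of_convex (hΘ.sub (convex_singleton y))).1 hk
  rw [Set.mem_singleton_iff] at hy'
  exact ⟨r, hr, z, hz, by rw [hy']⟩

theorem Convex.eventually_infDist_add_smul_lt {Θ : Set Y} (hΘ : Convex ℝ Θ) {y : Y} (hy : y ∈ Θ)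
    {v : Y} {e : ℝ} (he : infDist v (feasibleCone Θ y) < e) :
    ∀ᶠ p : ℝ × Y in 𝓝[>] 0 ×ˢ 𝓝 v, infDist (y + p.1 • p.2) Θ < p.1 * e := by
  have hK : (feasibleCone Θ y : Set Y).Nonempty := ⟨_, sub_mem_feasibleCone hy⟩
  obtain ⟨_, hk, hvk⟩ := (infDist_lt_iff hK).1 he
  obtain ⟨r, hr, z, hz, rfl⟩ := hΘ.exists_of_mem_feasibleCone hk
  have hsmall : ∀ᶠ t in 𝓝[>] (0 : ℝ), 0 < t ∧ t * r ≤ 1 := by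
    have : ∀ᶠ t in 𝓝 (0 : ℝ), t * r < 1 :=
      (continuous_mul_const r).tendsto' 0 0 (zero_mul r) |>.eventually_lt_const one_pos
    filter_upwards [self_mem_nhdsWithin, nhdsWithin_le_nhds this] with t ht htr
    exact ⟨ht, htr.le⟩
  have hnear : ∀ᶠ w in 𝓝 v, dist w (r • (z - y)) < e :=
    (continuous_id.dist continuous_const).continuousAt.eventually_lt continuousAt_const hvk
  filter_upwards [hsmall.prod_mk hnear] with ⟨t, w⟩ ⟨⟨ht, htr⟩, hw⟩
  have hmem : y + (t * r) • (z - y) ∈ Θ :=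
    hΘ.add_smul_sub_mem hy hz ⟨mul_nonneg ht.le hr.le, htr⟩
  calc infDist (y + t • w) Θ ≤ dist (y + t • w) (y + (t * r) • (z - y)) :=
        infDist_le_dist_of_mem hmem
    _ = t * dist w (r • (z - y)) := by
        rw [dist_add_left, mul_smul, dist_smul₀, Real.norm_of_nonneg ht.le]
    _ < t * e := mul_lt_mul_of_pos_left hw ht

theorem HasFDerivAt.eventually_infDist_apply_add_smul_lt {f : X → Y} {f' : X →L[ℝ] Y} {x u : X}
    {Θ : Set Y} (hf : HasFDerivAt f f' x) (hΘ : Convex ℝ Θ) (hx : f x ∈ Θ) {e : ℝ}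
    (he : infDist (f' u) (feasibleCone Θ (f x)) < e) :
    ∀ᶠ t in 𝓝[>] 0, infDist (f (x + t • u)) Θ < t * e := by
  have hslope := (hf.hasLineDerivAt u).tendsto_slope_zero_right
  filter_upwards [(tendsto_id.prodMk hslope).eventually (hΘ.eventually_infDist_add_smul_lt hx he),
    self_mem_nhdsWithin] with t ht (htpos : 0 < t)
  dsimp only [id] at ht
  rwa [smul_inv_smul₀ htpos.ne', add_sub_cancel] at ht

theorem HasFDerivAt.eventually_infDist_add_smul_lt_of_subregular {f : X → Y} {f' : X →L[ℝ] Y}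
    {x u : X} {Θ : Set Y} {Ω : Set X} {κ c : ℝ} (hf : HasFDerivAt f f' x) (hΘ : Convex ℝ Θ)
    (hx : f x ∈ Θ) (hκ : 0 < κ) (hsub : ∀ᶠ x' in 𝓝 x, infDist x' Ω ≤ κ * infDist (f x') Θ)
    (hc : κ * infDist (f' u) (feasibleCone Θ (f x)) < c) :
    ∀ᶠ t in 𝓝[>] 0, infDist (x + t • u) Ω < t * c := by
  have hline : Tendsto (fun t : ℝ => x + t • u) (𝓝[>] 0) (𝓝 x) :=
    (continuous_const.add (continuous_id.smul continuous_const)).tendsto' 0 x (by simp)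
      |>.mono_left nhdsWithin_le_nhds
  filter_upwards [hf.eventually_infDist_apply_add_smul_lt hΘ hx (lt_div_iff₀' hκ |>.2 hc),
    hline.eventually hsub] with t hΘt hΩt
  calc infDist (x + t • u) Ω ≤ κ * infDist (f (x + t • u)) Θ := hΩt
    _ < κ * (t * (c / κ)) := mul_lt_mul_of_pos_left hΘt hκ
    _ = t * c := by field_simp

theorem IsLocalMinOn.neg_apply_le_of_infDist_add_smul_lt {ϑ : X → ℝ} {ϑ' : X →L[ℝ] ℝ}
    {Ω : Set X} {x u : X} {c : ℝ} (hmin : IsLocalMinOn ϑ Ω x) (hϑ : HasFDerivAt ϑ ϑ' x)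
    (hΩ : Ω.Nonempty) (hdist : ∀ c' > c, ∀ᶠ t in 𝓝[>] 0, infDist (x + t • u) Ω < t * c') :
    -ϑ' u ≤ ‖ϑ'‖ * c := by
  suffices h : ∀ δ > 0, 0 ≤ ϑ' u + ‖ϑ'‖ * (c + δ) + δ * (‖u‖ + c + δ) by
    have hlim : Tendsto (fun δ => ϑ' u + ‖ϑ'‖ * (c + δ) + δ * (‖u‖ + c + δ)) (𝓝[>] 0)
        (𝓝 (ϑ' u + ‖ϑ'‖ * c)) :=
      (Continuous.tendsto' (by fun_prop) 0 _ (by simp)).mono_left nhdsWithin_le_nhds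
    linarith [ge_of_tendsto hlim (eventually_nhdsWithin_of_forall h)]
  intro δ hδ
  obtain ⟨r, hr, hball⟩ : ∃ r > 0, ∀ w ∈ Ω, dist w x < r → 0 ≤ ϑ' (w - x) + δ * ‖w - x‖ := by
    obtain ⟨r, hr, hsub⟩ := Metric.mem_nhdsWithin_iff.1
      (hmin.and (nhdsWithin_le_nhds (hϑ.isLittleO.bound hδ)))
    refine ⟨r, hr, fun w hw hwr => ?_⟩
    obtain ⟨hϑw, hrem⟩ := hsub ⟨hwr, hw⟩
    rw [Real.norm_eq_abs] at hrem
    linarith [le_abs_self (ϑ w - ϑ x - ϑ' (w - x))]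
  have hsmall : ∀ᶠ t in 𝓝[>] (0 : ℝ), t * (‖u‖ + c + δ) < r :=
    nhdsWithin_le_nhds <| (continuous_mul_const _).tendsto' 0 0 (zero_mul _)
      |>.eventually_lt_const hr
  obtain ⟨t, ⟨hΩt, htr⟩, (ht : 0 < t)⟩ :=
    ((hdist (c + δ) (lt_add_of_pos_right c hδ)).and hsmall).and self_mem_nhdsWithin |>.exists
  obtain ⟨w, hwΩ, hw⟩ := (infDist_lt_iff hΩ).1 hΩt
  rw [dist_eq_norm, norm_sub_rev] at hw
  have hsplit : w - x = t • u + (w - (x + t • u)) := by abel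
  have hwx : ‖w - x‖ ≤ t * (‖u‖ + c + δ) := by
    calc ‖w - x‖ ≤ ‖t • u‖ + ‖w - (x + t • u)‖ := hsplit ▸ norm_add_le _ _
      _ ≤ t * ‖u‖ + t * (c + δ) := by rw [norm_smul, Real.norm_of_nonneg ht.le]; linarith
      _ = t * (‖u‖ + c + δ) := by ring
  have hlin : ϑ' (w - x) ≤ t * ϑ' u + ‖ϑ'‖ * (t * (c + δ)) := by
    rw [hsplit, map_add, map_smul, smul_eq_mul]
    gcongr
    calc ϑ' (w - (x + t • u)) ≤ ‖ϑ'‖ * ‖w - (x + t • u)‖ := (le_abs_self _).trans (ϑ'.le_opNorm _)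
      _ ≤ ‖ϑ'‖ * (t * (c + δ)) := by gcongr
  have hpos : 0 ≤ t * (ϑ' u + ‖ϑ'‖ * (c + δ) + δ * (‖u‖ + c + δ)) :=
    calc 0 ≤ ϑ' (w - x) + δ * ‖w - x‖ := hball w hwΩ (by rw [dist_eq_norm]; linarith)
      _ ≤ t * ϑ' u + ‖ϑ'‖ * (t * (c + δ)) + δ * (t * (‖u‖ + c + δ)) := by gcongr
      _ = t * (ϑ' u + ‖ϑ'‖ * (c + δ) + δ * (‖u‖ + c + δ)) := by ring
  exact (mul_nonneg_iff_of_pos_left ht).1 hpos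

end Normed

theorem dual_necessary_optimality_smooth_cost_general
    {X Y : Type*} [NormedAddCommGroup X] [NormedSpace ℝ X]
    [NormedAddCommGroup Y] [NormedSpace ℝ Y]
    (ϑ : X → ℝ) (ϑ' : X →L[ℝ] ℝ) (f : X → Y) (f' : X →L[ℝ] Y)
    (Θ : Set Y) (xb : X) (κ : ℝ)
    (hϑ' : HasFDerivAt ϑ ϑ' xb)
    (hf' : HasFDerivAt f f' xb)
    (hΘconv : Convex ℝ Θ)
    (hfeas : f xb ∈ Θ)
    (hκ : 0 < κ)
    (hMSCQ : ∃ U ∈ 𝓝 xb, ∀ x ∈ U, infDist x {x' | f x' ∈ Θ} ≤ κ * infDist (f x) Θ)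
    (hmin : ∃ U ∈ 𝓝 xb, ∀ x ∈ U, f x ∈ Θ → ϑ xb ≤ ϑ x) :
    ∃ lam : Y →L[ℝ] ℝ,
      ϑ' + lam.comp f' = 0 ∧
      lam ∈ convNormal Θ (f xb) ∧ ‖lam‖ ≤ κ * ‖ϑ'‖ := by
  set K := feasibleCone Θ (f xb)
  have hK₀ : (0 : Y) ∈ K := by simpa using sub_mem_feasibleCone (y := f xb) hfeas
  have hmin' : IsLocalMinOn ϑ {x | f x ∈ Θ} xb := by
    obtain ⟨U, hU, hUmin⟩ := hmin
    exact mem_of_superset (inter_mem_nhdsWithin _ hU) fun x hx => hUmin x hx.2 hx.1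
  obtain ⟨U, hU, hsub⟩ := hMSCQ
  have key (u : X) : -ϑ' u ≤ κ * ‖ϑ'‖ * infDist (f' u) K := by
    rw [mul_comm κ, mul_assoc]
    exact hmin'.neg_apply_le_of_infDist_add_smul_lt hϑ' ⟨xb, hfeas⟩ fun c hc =>
      hf'.eventually_infDist_add_smul_lt_of_subregular hΘconv hfeas hκ
        (eventually_of_mem hU hsub) hc
  have hC : 0 ≤ κ * ‖ϑ'‖ := by positivity
  obtain ⟨lam, hcomp, hle, hnorm⟩ := f'.exists_comp_eq_of_le_sublinear (-ϑ')
    (fun y => κ * ‖ϑ'‖ * infDist y K) hC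
    (fun c hc y => by rw [K.infDist_smul hc]; ring)
    (fun y z => by
      rw [← mul_add]
      exact mul_le_mul_of_nonneg_left (K.infDist_add_le ⟨0, hK₀⟩ y z) hC)
    (fun y => mul_le_mul_of_nonneg_left (by simpa using infDist_le_dist_of_mem (x := y) hK₀) hC)
    key
  refine ⟨lam, by rw [hcomp, add_neg_cancel], fun z hz => ?_, hnorm⟩
  have hzK : z - f xb ∈ K := sub_mem_feasibleCone hz
  simpa [infDist_zero_of_mem hzK] using hle (z - f xb)

/-- dual necessary optimality conditions with the enhanced bound
estimate for Lagrange multipliers in the case of a smooth cost function. -/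
theorem dual_necessary_optimality_smooth_cost
    {X Y : Type*} [NormedAddCommGroup X] [NormedSpace ℝ X]
    [NormedAddCommGroup Y] [NormedSpace ℝ Y]
    (ϑ : X → ℝ) (ϑ' : X →L[ℝ] ℝ) (f : X → Y) (f' : X →L[ℝ] Y)
    (Θ : Set Y) (xb : X) (κ : ℝ)
    (hϑ : ContDiffAt ℝ 1 ϑ xb) (hϑ' : HasFDerivAt ϑ ϑ' xb)
    (hf : ContDiffAt ℝ 1 f xb) (hf' : HasFDerivAt f f' xb)
    (hΘconv : Convex ℝ Θ) (hΘloc : ∃ V ∈ 𝓝 (f xb), IsClosed (Θ ∩ V))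
    (hfeas : f xb ∈ Θ)
    (hκ : 0 < κ)
    (hMSCQ : ∃ U ∈ 𝓝 xb, ∀ x ∈ U, infDist x {x' | f x' ∈ Θ} ≤ κ * infDist (f x) Θ)
    (hmin : ∃ U ∈ 𝓝 xb, ∀ x ∈ U, f x ∈ Θ → ϑ xb ≤ ϑ x) :
    ∃ lam : Y →L[ℝ] ℝ,
      ϑ' + lam.comp f' = 0 ∧
      lam ∈ convNormal Θ (f xb) ∧ ‖lam‖ ≤ κ * ‖ϑ'‖ :=
  dual_necessary_optimality_smooth_cost_general ϑ ϑ' f f' Θ xb κ hϑ' hf' hΘconv hfeas hκ hMSCQ hmin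
end
end
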